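/- arXiv:math/0701586 — 6 statements merged into one kernel-verified Lean document; each statement's English description precedes it below -/
import Mathlib

section
/- A finite connected plane graph (a connected multigraph embedded in the sphere) is bipartite if and only if every face of the embedding has even perimeter (where the perimeter of a face counts edges with multiplicity, bridges counted twice). -/
set_option maxHeartbeats 1000000
open MulAction Subgroup Finset Module

section Aux
variable {D : Type*} {X : Type*}

lemma aux_zpow (σ : Equiv.Perm D) (w : D → X) (h : ∀ d, w (σ d) = w d) :
    ∀ (n : ℤ) (d : D), w ((σ ^ n) d) = w d := by
  have hnat : ∀ (n : ℕ) (d : D), w ((σ ^ n) d) = w d := by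
    intro n
    induction n with
    | zero => intro d; simp
    | succ n ih =>
      intro d
      rw [pow_succ, Equiv.Perm.mul_apply, ih, h]
  intro n d
  cases n with
  | ofNat n => exact hnat n d
  | negSucc n =>
    have : w ((σ ^ (n + 1)) (((σ ^ (n+1))⁻¹) d)) = w (((σ ^ (n+1))⁻¹) d) := hnat (n+1) _
    rw [(fun (e : Equiv.Perm D) y => (Equiv.eq_symm_apply e).mp rfl : ∀ (e : Equiv.Perm D) y, e (e⁻¹ y) = y)] at this
    simpa [zpow_negSucc] using this.symm

lemma aux_orbit_eq (σ : Equiv.Perm D) (w : D → X) (h : ∀ d, w (σ d) = w d)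
    {d d' : D} (hdd : Quotient.mk (MulAction.orbitRel (Subgroup.zpowers σ) D) d
      = Quotient.mk (MulAction.orbitRel (Subgroup.zpowers σ) D) d') : w d = w d' := by
  have hrel : d ∈ MulAction.orbit (Subgroup.zpowers σ) d' :=
    (MulAction.orbitRel_apply).1 (Quotient.exact hdd)
  obtain ⟨⟨g, hg⟩, hgd⟩ := hrel
  obtain ⟨n, rfl⟩ := hg
  have : (σ ^ n) d' = d := hgd
  rw [← this, aux_zpow σ w h]

lemma aux_const (α ρ : Equiv.Perm D)
    (hconn : ∀ d d' : D,
      d' ∈ MulAction.orbit (Subgroup.closure {ρ, α} : Subgroup (Equiv.Perm D)) d)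
    (w : D → X) (hρ : ∀ d, w (ρ d) = w d) (hα : ∀ d, w (α d) = w d)
    (d d' : D) : w d = w d' := by
  have key : ∀ g ∈ Subgroup.closure ({ρ, α} : Set (Equiv.Perm D)), ∀ x, w (g x) = w x := by
    intro g hg
    induction hg using Subgroup.closure_induction with
    | mem g hgmem =>
      rcases hgmem with h1 | h1
      · subst h1; exact hρ
      · rw [Set.mem_singleton_iff] at h1; subst h1; exact hα
    | one => intro x; simp
    | mul g h hgc hhc ihg ihh => intro x; rw [Equiv.Perm.mul_apply, ihg, ihh]
    | inv g hgc ihg =>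
      intro x
      have := ihg (g⁻¹ x)
      rw [(fun (e : Equiv.Perm D) y => (Equiv.eq_symm_apply e).mp rfl : ∀ (e : Equiv.Perm D) y, e (e⁻¹ y) = y)] at this; exact this.symm
  obtain ⟨⟨g, hg⟩, hgd⟩ := hconn d d'
  have : g d = d' := hgd
  rw [← this, key g hg]

end Aux

lemma aux_span1 {I : Type*} [Fintype I] [Nonempty I] (S : Submodule (ZMod 2) (I → ZMod 2))
    (hS : ∀ y ∈ S, ∀ i j : I, y i = y j) : Module.finrank (ZMod 2) S ≤ 1 := by
  obtain ⟨i₀⟩ := ‹Nonempty I›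
  have hone : (fun _ => 1 : I → ZMod 2) ≠ 0 := by
    intro h
    have := congrFun h i₀
    simp at this
  have hle : S ≤ Submodule.span (ZMod 2) {(fun _ => 1 : I → ZMod 2)} := by
    intro y hy
    have : y = y i₀ • (fun _ => 1 : I → ZMod 2) := by
      funext i
      simp only [Pi.smul_apply, smul_eq_mul, mul_one]
      exact hS y hy i i₀
    rw [this]
    exact Submodule.smul_mem _ _ (Submodule.mem_span_singleton_self _)
  calc Module.finrank (ZMod 2) S
      ≤ Module.finrank (ZMod 2) (Submodule.span (ZMod 2) {(fun _ => 1 : I → ZMod 2)}) :=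
        Submodule.finrank_mono hle
    _ = 1 := finrank_span_singleton hone

/-- A finite connected plane graph (connected multigraph embedded in the sphere) is
bipartite iff every face has even perimeter.  The embedded multigraph is encoded as a
combinatorial map: a finite nonempty set of darts `D`, a fixed-point-free involution `α`
pairing the two darts of each edge, and a rotation permutation `ρ` whose orbits are the
vertices.  Faces are the orbits of `ρ * α`, and the perimeter of a face is its orbit
length (so an edge with both sides on the same face is counted twice).  Connectedness is
transitivity of the group generated by `ρ` and `α`, and the sphere condition is Euler's
formula `V - E + F = 2`, i.e. `2(V + F) = #darts + 4`.  Bipartiteness is a 2-colouring of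
darts constant on vertices and flipped by `α`. -/
theorem plane_graph_bipartite_iff_even_faces {D : Type*} [Fintype D] [Nonempty D]
    (α ρ : Equiv.Perm D)
    (hα2 : ∀ d, α (α d) = d) (hαne : ∀ d, α d ≠ d)
    (hconn : ∀ d d' : D,
      d' ∈ MulAction.orbit (Subgroup.closure {ρ, α} : Subgroup (Equiv.Perm D)) d)
    (heuler : 2 * (Nat.card (Quotient (MulAction.orbitRel (Subgroup.zpowers ρ) D))
        + Nat.card (Quotient (MulAction.orbitRel (Subgroup.zpowers (ρ * α)) D)))
      = Fintype.card D + 4) :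
    (∃ c : D → Bool, (∀ d, c (ρ d) = c d) ∧ (∀ d, c (α d) = !c d)) ↔
      (∀ d : D,
        Even (Nat.card (MulAction.orbit (Subgroup.zpowers (ρ * α) : Subgroup (Equiv.Perm D)) d))) := by
  constructor
  · rintro ⟨c, hcρ, hcα⟩ d
    classical
    set φ : Equiv.Perm D := ρ * α with hφ
    have hstep : ∀ x, c (φ x) = !c x := by
      intro x; rw [hφ, Equiv.Perm.mul_apply, hcρ, hcα]
    have hcard : Nat.card (MulAction.orbit (Subgroup.zpowers φ) d)
        = Function.minimalPeriod (⇑φ) d := by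
      haveI : Fintype (MulAction.orbit (Subgroup.zpowers φ) d) := Fintype.ofFinite _
      rw [Nat.card_eq_fintype_card]
      exact (MulAction.minimalPeriod_eq_card (a := φ) (b := d)).symm
    set m := Function.minimalPeriod (⇑φ) d with hm
    have hmz : NeZero m := MulAction.minimalPeriod_pos (a := φ) (b := d)
    have hper : (⇑φ)^[m] d = d := Function.iterate_minimalPeriod
    have h2 : ∀ n : ℕ, c ((⇑φ)^[2 * n] d) = c d := by
      intro n
      induction n with
      | zero => simp
      | succ n ih =>
        have h21 : 2 * (n + 1) = (2 * n) + 1 + 1 := by ring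
        rw [h21, Function.iterate_succ_apply', Function.iterate_succ_apply',
          hstep, hstep, Bool.not_not, ih]
    rcases Nat.even_or_odd m with he | ho
    · rw [hcard]; exact he
    · exfalso
      obtain ⟨j, hj⟩ := ho
      have hbad : c d = !c d := by
        conv_lhs => rw [← hper, hj]
        rw [add_comm, Function.iterate_add_apply, Function.iterate_one, hstep, h2 j]
      simp at hbad
  · intro heven
    classical
    set φ : Equiv.Perm D := ρ * α with hφ
    set QV := Quotient (MulAction.orbitRel (Subgroup.zpowers ρ) D) with hQV
    set QF := Quotient (MulAction.orbitRel (Subgroup.zpowers φ) D) with hQF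
    set QE := Quotient (MulAction.orbitRel (Subgroup.zpowers α) D) with hQE
    haveI : Fintype QV := Fintype.ofFinite _
    haveI : Fintype QF := Fintype.ofFinite _
    haveI : Fintype QE := Fintype.ofFinite _
    haveI : Nonempty QV := Nonempty.map (Quotient.mk _) inferInstance
    haveI : Nonempty QF := Nonempty.map (Quotient.mk _) inferInstance
    set vmap : D → QV := Quotient.mk _ with hvmapdef
    set fmap : D → QF := Quotient.mk _ with hfmapdef
    set emap : D → QE := Quotient.mk _ with hemapdef
    have hvsur : Function.Surjective vmap := fun q => ⟨q.out, q.out_eq⟩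
    have hfsur : Function.Surjective fmap := fun q => ⟨q.out, q.out_eq⟩
    have hesur : Function.Surjective emap := fun q => ⟨q.out, q.out_eq⟩
    have hvρ : ∀ d, vmap (ρ d) = vmap d := by
      intro d
      exact Quotient.sound ⟨⟨ρ, Subgroup.mem_zpowers ρ⟩, rfl⟩
    have hfφ : ∀ d, fmap (φ d) = fmap d := by
      intro d
      exact Quotient.sound ⟨⟨φ, Subgroup.mem_zpowers φ⟩, rfl⟩
    have heα : ∀ d, emap (α d) = emap d := by
      intro d
      exact Quotient.sound ⟨⟨α, Subgroup.mem_zpowers α⟩, rfl⟩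
    have hρφα : ∀ d, ρ d = φ (α d) := by
      intro d
      rw [hφ, Equiv.Perm.mul_apply, hα2]
    have hvαφ : ∀ d, vmap (φ d) = vmap (α d) := by
      intro d
      rw [hφ, Equiv.Perm.mul_apply]
      exact hvρ (α d)
    have hcancel : ∀ x y : ZMod 2, x + y = 0 → x = y := by decide
    -- the pair-condition iff used twice
    have hpairiff : ∀ d x : D, (α x = d ∨ α x = α d) ↔ (x = d ∨ x = α d) := by
      intro d x
      constructor
      · rintro (h | h)
        · right; rw [← h, hα2]
        · left; exact α.injective h
      · rintro (h | h)
        · right; rw [h]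
        · left; rw [h, hα2]
    -- linear algebra setup
    set L : (QV → ZMod 2) →ₗ[ZMod 2] (D → ZMod 2) :=
      { toFun := fun u => fun d => u (vmap d) + u (vmap (α d))
        map_add' := by intro u v; funext d; simp only [Pi.add_apply]; ring
        map_smul' := by
          intro b u; funext d
          simp only [Pi.smul_apply, smul_eq_mul, RingHom.id_apply, mul_add] } with hLdef
    set M : (D → ZMod 2) →ₗ[ZMod 2] (QF → ZMod 2) :=
      { toFun := fun w => fun f => ∑ d : D, if fmap d = f then w d else 0
        map_add' := by
          intro u v; funext f
          simp only [Pi.add_apply]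
          rw [← Finset.sum_add_distrib]
          refine Finset.sum_congr rfl fun d _ => ?_
          split <;> simp
        map_smul' := by
          intro b u; funext f
          simp only [Pi.smul_apply, smul_eq_mul, RingHom.id_apply]
          rw [Finset.mul_sum]
          refine Finset.sum_congr rfl fun d _ => ?_
          split <;> simp } with hMdef
    set C1 : Submodule (ZMod 2) (D → ZMod 2) :=
      { carrier := {w | ∀ d, w (α d) = w d}
        add_mem' := by intro u v hu hv d; simp only [Pi.add_apply, hu d, hv d]
        zero_mem' := by intro d; rfl
        smul_mem' := by intro b w hw d; simp only [Pi.smul_apply, hw d] } with hC1def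
    have hC1mem : ∀ w : D → ZMod 2, w ∈ C1 ↔ ∀ d, w (α d) = w d := fun _ => Iff.rfl
    have hLC1 : ∀ u, L u ∈ C1 := by
      intro u d
      show u (vmap (α d)) + u (vmap (α (α d))) = u (vmap d) + u (vmap (α d))
      rw [hα2, add_comm]
    set L₁ : (QV → ZMod 2) →ₗ[ZMod 2] C1 := L.codRestrict C1 hLC1 with hL1def
    set M₁ : C1 →ₗ[ZMod 2] (QF → ZMod 2) := M.comp C1.subtype with hM1def
    -- M ∘ L = 0
    have hML : ∀ u, M (L u) = 0 := by
      intro u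
      funext f
      show (∑ d : D, if fmap d = f then u (vmap d) + u (vmap (α d)) else 0) = 0
      have hsplit : ∀ d : D, (if fmap d = f then u (vmap d) + u (vmap (α d)) else 0)
          = (if fmap d = f then u (vmap d) else 0) + (if fmap d = f then u (vmap (φ d)) else 0) := by
        intro d
        rw [hvαφ]
        split <;> simp
      rw [Finset.sum_congr rfl fun d _ => hsplit d, Finset.sum_add_distrib]
      have hre : (∑ d : D, if fmap d = f then u (vmap (φ d)) else 0)
          = ∑ d : D, if fmap d = f then u (vmap d) else 0 := by
        refine Fintype.sum_equiv (φ : Equiv.Perm D) _ _ fun d => ?_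
        rw [hfφ]
      rw [hre, ← Finset.sum_add_distrib]
      refine Finset.sum_eq_zero fun d _ => ?_
      split
      · exact (by decide : ∀ x : ZMod 2, x + x = 0) _
      · exact add_zero 0
    -- kernel of L₁ has dimension ≤ 1
    have hkerL : finrank (ZMod 2) (LinearMap.ker L₁) ≤ 1 := by
      rw [hL1def, LinearMap.ker_codRestrict]
      refine aux_span1 (LinearMap.ker L) ?_
      intro u hu q q'
      rw [LinearMap.mem_ker] at hu
      obtain ⟨d, rfl⟩ := hvsur q
      obtain ⟨d', rfl⟩ := hvsur q'
      have huα : ∀ x, u (vmap (α x)) = u (vmap x) := by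
        intro x
        exact (hcancel _ _ (congrFun hu x)).symm
      have huρ : ∀ x, u (vmap (ρ x)) = u (vmap x) := fun x => by rw [hvρ]
      exact aux_const α ρ hconn (fun x => u (vmap x)) huρ huα d d'
    -- dimension of C1 is the number of edges
    have hdimC1 : finrank (ZMod 2) C1 = Fintype.card QE := by
      let T : (QE → ZMod 2) →ₗ[ZMod 2] C1 :=
        { toFun := fun u => ⟨fun d => u (emap d), fun d => by show u (emap (α d)) = u (emap d); rw [heα]⟩
          map_add' := by intro u v; apply Subtype.ext; rfl
          map_smul' := by intro b u; apply Subtype.ext; rfl }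
      have hTbij : Function.Bijective T := by
        constructor
        · intro u v huv
          funext q
          obtain ⟨d, rfl⟩ := hesur q
          exact congrFun (congrArg Subtype.val huv) d
        · rintro ⟨w, hw⟩
          refine ⟨fun q => w q.out, ?_⟩
          apply Subtype.ext
          funext d
          show w ((emap d).out) = w d
          exact aux_orbit_eq α w hw (Quotient.out_eq (emap d))
      have h := LinearEquiv.finrank_eq (LinearEquiv.ofBijective T hTbij)
      rw [Module.finrank_fintype_fun_eq_card] at h
      exact h.symm
    -- the number of darts is twice the number of edges
    have hcardD : Fintype.card D = 2 * Fintype.card QE := by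
      have hfib := Finset.card_eq_sum_card_fiberwise
        (f := emap) (s := Finset.univ) (t := Finset.univ) (fun d _ => Finset.mem_univ _)
      have hfib2 : ∀ q : QE, (Finset.univ.filter (fun d => emap d = q)).card = 2 := by
        intro q
        obtain ⟨d, rfl⟩ := hesur q
        have hset : Finset.univ.filter (fun x => emap x = emap d) = {d, α d} := by
          ext x
          simp only [Finset.mem_filter, Finset.mem_univ, true_and, Finset.mem_insert,
            Finset.mem_singleton]
          constructor
          · intro hx
            have hPα : ∀ y, (fun z => (z = d ∨ z = α d : Prop)) (α y)
                = (fun z => (z = d ∨ z = α d : Prop)) y := fun y => propext (hpairiff d y)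
            have hcast := aux_orbit_eq α (fun z => (z = d ∨ z = α d : Prop)) hPα hx
            exact cast hcast.symm (Or.inl rfl)
          · rintro (rfl | rfl)
            · rfl
            · exact heα d
        rw [hset, Finset.card_insert_of_notMem (by
          simp only [Finset.mem_singleton]
          exact fun h => hαne d h.symm), Finset.card_singleton]
      rw [Finset.card_univ] at hfib
      rw [hfib, Finset.sum_congr rfl (fun q _ => hfib2 q), Finset.sum_const, Finset.card_univ,
        smul_eq_mul, mul_comm]
    -- dual kernel bound
    have hMapp : ∀ (w : D → ZMod 2) f, M w f = ∑ d : D, if fmap d = f then w d else 0 :=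
      fun _ _ => rfl
    set e : QF → (QF → ZMod 2) := fun f => fun j => if f = j then 1 else 0 with hedef
    have hxi : ∀ (ξ : Module.Dual (ZMod 2) (QF → ZMod 2)) (x : QF → ZMod 2),
        ξ x = ∑ f : QF, x f * ξ (e f) := by
      intro ξ x
      conv_lhs => rw [pi_eq_sum_univ x]
      rw [map_sum]
      refine Finset.sum_congr rfl fun f _ => ?_
      rw [map_smul, smul_eq_mul]
    set Φ : Module.Dual (ZMod 2) (QF → ZMod 2) →ₗ[ZMod 2] (QF → ZMod 2) :=
      { toFun := fun ξ => fun f => ξ (e f)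
        map_add' := by intro ξ ψ; funext f; simp
        map_smul' := by intro b ξ; funext f; simp } with hΦdef
    have hΦinj : Function.Injective Φ := by
      intro ξ ψ h
      apply LinearMap.ext
      intro x
      rw [hxi ξ x, hxi ψ x]
      refine Finset.sum_congr rfl fun f _ => ?_
      have : ξ (e f) = ψ (e f) := congrFun h f
      rw [this]
    have hMw : ∀ (ξ : Module.Dual (ZMod 2) (QF → ZMod 2)) (w : D → ZMod 2),
        ξ (M w) = ∑ d : D, w d * ξ (e (fmap d)) := by
      intro ξ w
      rw [hxi]
      simp only [hMapp]
      have h1 : ∀ f : QF, (∑ d : D, if fmap d = f then w d else 0) * ξ (e f)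
          = ∑ d : D, if fmap d = f then w d * ξ (e f) else 0 := by
        intro f
        rw [Finset.sum_mul]
        exact Finset.sum_congr rfl fun d _ => by split <;> simp
      rw [Finset.sum_congr rfl fun f _ => h1 f, Finset.sum_comm]
      refine Finset.sum_congr rfl fun d _ => ?_
      rw [Finset.sum_ite_eq Finset.univ (fmap d) (fun f => w d * ξ (e f))]
      simp
    have hkerdual : finrank (ZMod 2) (LinearMap.ker (M₁.dualMap)) ≤ 1 := by
      have hfr : finrank (ZMod 2) (LinearMap.ker (M₁.dualMap))
          = finrank (ZMod 2) ((LinearMap.ker (M₁.dualMap)).map Φ) := LinearEquiv.finrank_eq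
        (Submodule.equivMapOfInjective Φ hΦinj (LinearMap.ker (M₁.dualMap)))
      rw [hfr]
      refine aux_span1 _ ?_
      rintro y ⟨ξ, hξmem, rfl⟩
      have hξ : M₁.dualMap ξ = 0 := hξmem
      have hξ0 : ∀ v : C1, ξ (M (v : D → ZMod 2)) = 0 := by
        intro v
        have := congrFun (congrArg (fun (g : Module.Dual (ZMod 2) C1) => (g : C1 → ZMod 2)) hξ) v
        have h' : ξ (M₁ v) = 0 := by simpa using this
        exact h'
      have hpair : ∀ d : D, ξ (e (fmap d)) = ξ (e (fmap (α d))) := by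
        intro d
        have hwC1 : (fun x => if x = d ∨ x = α d then (1 : ZMod 2) else 0) ∈ C1 := by
          intro x
          show (if α x = d ∨ α x = α d then (1 : ZMod 2) else 0) = _
          exact if_congr (hpairiff d x) rfl rfl
        have h0 := hξ0 ⟨_, hwC1⟩
        rw [hMw] at h0
        simp only [ite_mul, one_mul, zero_mul] at h0
        have hsetp : Finset.univ.filter (fun x => x = d ∨ x = α d) = {d, α d} := by
          ext x; simp
        rw [← Finset.sum_filter, hsetp,
          Finset.sum_pair (fun h => hαne d h.symm)] at h0
        exact hcancel _ _ h0
      intro i j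
      show ξ (e i) = ξ (e j)
      obtain ⟨d, rfl⟩ := hfsur i
      obtain ⟨d', rfl⟩ := hfsur j
      have hyα : ∀ x, ξ (e (fmap (α x))) = ξ (e (fmap x)) := fun x => (hpair x).symm
      have hyρ : ∀ x, ξ (e (fmap (ρ x))) = ξ (e (fmap x)) := by
        intro x
        rw [hρφα x, hfφ (α x), hyα]
      exact aux_const α ρ hconn (fun x => ξ (e (fmap x))) hyρ hyα d d'
    -- rank-nullity and Euler bookkeeping
    have hrnM := LinearMap.finrank_range_add_finrank_ker M₁
    have hrnD := LinearMap.finrank_range_add_finrank_ker (M₁.dualMap)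
    have hdd : finrank (ZMod 2) (Module.Dual (ZMod 2) (QF → ZMod 2)) = Fintype.card QF := by
      rw [Subspace.dual_finrank_eq, Module.finrank_fintype_fun_eq_card]
    have hrr : finrank (ZMod 2) (LinearMap.range M₁.dualMap)
        = finrank (ZMod 2) (LinearMap.range M₁) :=
      LinearMap.finrank_range_dualMap_eq_finrank_range M₁
    have hrnL := LinearMap.finrank_range_add_finrank_ker L₁
    rw [Module.finrank_fintype_fun_eq_card] at hrnL
    rw [hdd, hrr] at hrnD
    rw [hdimC1] at hrnM
    rw [Nat.card_eq_fintype_card, Nat.card_eq_fintype_card, hcardD] at heuler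
    have hkfin : finrank (ZMod 2) (LinearMap.ker M₁)
        ≤ finrank (ZMod 2) (LinearMap.range L₁) := by omega
    have hle : LinearMap.range L₁ ≤ LinearMap.ker M₁ := by
      rintro v ⟨u, rfl⟩
      rw [LinearMap.mem_ker]
      exact hML u
    have heqrk : LinearMap.range L₁ = LinearMap.ker M₁ :=
      Submodule.eq_of_le_of_finrank_le hle hkfin
    -- the all-ones edge cochain is a cocycle
    have hone : ∀ d : D, (fun _ : D => (1 : ZMod 2)) (α d) = (fun _ : D => (1 : ZMod 2)) d :=
      fun _ => rfl
    have hw1 : (⟨fun _ => 1, hone⟩ : C1) ∈ LinearMap.ker M₁ := by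
      rw [LinearMap.mem_ker]
      funext f
      show (∑ d : D, if fmap d = f then (1 : ZMod 2) else 0) = 0
      rw [Finset.sum_boole]
      obtain ⟨d0, rfl⟩ := hfsur f
      have hset : Finset.univ.filter (fun d => fmap d = fmap d0)
          = (MulAction.orbit (Subgroup.zpowers φ) d0).toFinset := by
        ext x
        simp only [Finset.mem_filter, Finset.mem_univ, true_and, Set.mem_toFinset]
        constructor
        · intro hx
          exact (MulAction.orbitRel_apply).1 (Quotient.exact hx)
        · intro hx
          exact Quotient.sound ((MulAction.orbitRel_apply).2 hx)
      rw [hset]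
      have hcardo : (MulAction.orbit (Subgroup.zpowers φ) d0).toFinset.card
          = Nat.card (MulAction.orbit (Subgroup.zpowers φ) d0) := by
        rw [Set.toFinset_card, Nat.card_eq_fintype_card]
      rw [hcardo, ZMod.natCast_eq_zero_iff]
      exact (heven d0).two_dvd
    rw [← heqrk] at hw1
    obtain ⟨u, hu⟩ := hw1
    have hu1 : ∀ d, u (vmap d) + u (vmap (α d)) = 1 := by
      intro d
      exact congrFun (congrArg Subtype.val hu) d
    refine ⟨fun d => decide (u (vmap d) = 1), fun d => ?_, fun d => ?_⟩
    · show decide (u (vmap (ρ d)) = 1) = decide (u (vmap d) = 1)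
      rw [hvρ]
    · exact (by decide : ∀ x y : ZMod 2, x + y = 1 → (decide (y = 1) = !decide (x = 1)))
        _ _ (hu1 d)
end

section
/- Let K[x₁,…,x_k] be a polynomial ring over a field K and let I be the ideal generated by x_i^{f_i} for 1 ≤ i ≤ k and by all products x_i x_j with i ≠ j, where each f_i ≥ 1. Then the maximal index of nilpotency of a nilpotent element of K[x₁,…,x_k]/I equals the maximum of the f_i. -/
/-!
Write `xᵢ` for the image of `X i` in the quotient. For the lower bound, `x_{i₀}` with
`f i₀ = max f` has index exactly `f i₀`: sending `X i₀ ↦ t` and the other variables to `0`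
maps the ideal into `(t ^ f i₀)` in `K[t]`. For the upper bound, a nilpotent element has
vanishing constant term, so it is a sum `∑ cᵢ xᵢ` of pairwise orthogonal terms; hence its
`N`-th power is `∑ cᵢ ^ N xᵢ ^ N = 0` for `N = max f`.
-/

open MvPolynomial in
/-- The ideal `⟨x_i^{f_i} (1 ≤ i ≤ k), x_i x_j (i ≠ j)⟩` of `K[x₁,…,x_k]`. -/
noncomputable def truncIdeal (K : Type*) [Field K] {k : ℕ} (f : Fin k → ℕ) :
    Ideal (MvPolynomial (Fin k) K) :=
  Ideal.span ((Set.range fun i => X i ^ f i) ∪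
    {p | ∃ i j : Fin k, i ≠ j ∧ p = X i * X j})

open MvPolynomial

theorem Finset.sum_pow_eq_sum_pow_of_mul_eq_zero {ι R : Type*} [CommSemiring R]
    (s : Finset ι) (a : ι → R) (h : ∀ i ∈ s, ∀ j ∈ s, i ≠ j → a i * a j = 0)
    {n : ℕ} (hn : n ≠ 0) : (∑ i ∈ s, a i) ^ n = ∑ i ∈ s, a i ^ n := by
  induction n, Nat.one_le_iff_ne_zero.mpr hn using Nat.le_induction with
  | base => simp
  | succ n hn1 ih =>
    rw [pow_succ, ih (by omega), Finset.sum_mul_sum]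
    refine Finset.sum_congr rfl fun i hi => ?_
    rw [Finset.sum_eq_single_of_mem i hi, pow_succ]
    intro j hj hji
    rw [← Nat.sub_add_cancel hn1, pow_succ, mul_assoc, h i hi j hj hji.symm, mul_zero]

theorem MvPolynomial.mem_idealOfVars_of_constantCoeff_eq_zero {σ R : Type*} [CommSemiring R]
    {p : MvPolynomial σ R} (hp : constantCoeff p = 0) : p ∈ idealOfVars σ R := by
  rw [← pow_one (idealOfVars σ R), mem_pow_idealOfVars_iff']
  intro x hx
  rw [Nat.lt_one_iff, Finsupp.degree_eq_zero_iff] at hx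
  rwa [hx, ← constantCoeff_eq]

namespace truncIdeal

variable {K : Type*} [Field K] {k : ℕ} {f : Fin k → ℕ}

theorem X_mul_X_mem {i j : Fin k} (hij : i ≠ j) : X i * X j ∈ truncIdeal K f :=
  Ideal.subset_span (Or.inr ⟨i, j, hij, rfl⟩)

theorem X_pow_mem_iff (hf : ∀ i, f i ≠ 0) (i : Fin k) (l : ℕ) :
    X i ^ l ∈ truncIdeal K f ↔ f i ≤ l := by
  refine ⟨fun hl => ?_,
    (truncIdeal K f).pow_mem_of_pow_mem (Ideal.subset_span (Or.inl ⟨i, rfl⟩))⟩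
  let φ : MvPolynomial (Fin k) K →ₐ[K] Polynomial K := aeval (Pi.single i Polynomial.X)
  have hle : truncIdeal K f ≤ (Ideal.span {Polynomial.X ^ f i}).comap φ := by
    rw [truncIdeal, Ideal.span_le]
    rintro q (⟨j, rfl⟩ | ⟨a, b, hab, rfl⟩)
    · rcases eq_or_ne j i with rfl | hj <;> simp [φ, *]
    · rcases eq_or_ne a i with rfl | ha <;> simp [φ, hab.symm, *]
  have := hle hl
  rw [Ideal.mem_comap, map_pow, aeval_X, Pi.single_eq_same, Ideal.mem_span_singleton] at this
  exact (pow_dvd_pow_iff Polynomial.X_ne_zero Polynomial.not_isUnit_X).mp this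

theorem constantCoeff_eq_zero_of_isNilpotent_mk (hf : ∀ i, f i ≠ 0) {p : MvPolynomial (Fin k) K}
    (hp : IsNilpotent (Ideal.Quotient.mk (truncIdeal K f) p)) : constantCoeff p = 0 := by
  have hker : truncIdeal K f ≤ RingHom.ker (constantCoeff (R := K) (σ := Fin k)) := by
    rw [truncIdeal, Ideal.span_le]
    rintro q (⟨i, rfl⟩ | ⟨i, j, -, rfl⟩) <;> simp [hf]
  simpa using (hp.map (Ideal.Quotient.lift _ constantCoeff
    fun _ hq => RingHom.mem_ker.mp (hker hq))).eq_zero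

theorem pow_eq_zero_of_isNilpotent (hf : ∀ i, f i ≠ 0)
    {r : MvPolynomial (Fin k) K ⧸ truncIdeal K f} (hr : IsNilpotent r)
    {n : ℕ} (hfn : ∀ i, f i ≤ n) (hn : n ≠ 0) : r ^ n = 0 := by
  obtain ⟨p, rfl⟩ := Ideal.Quotient.mk_surjective r
  obtain ⟨c, rfl⟩ := Ideal.mem_span_range_iff_exists_fun.mp
    (mem_idealOfVars_of_constantCoeff_eq_zero (constantCoeff_eq_zero_of_isNilpotent_mk hf hr))
  rw [map_sum, Finset.sum_pow_eq_sum_pow_of_mul_eq_zero _ _ ?_ hn]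
  · refine Finset.sum_eq_zero fun i _ => ?_
    rw [map_mul, mul_pow, ← map_pow _ (X i), Ideal.Quotient.eq_zero_iff_mem.mpr
      ((X_pow_mem_iff hf i n).mpr (hfn i)), mul_zero]
  · intro i _ j _ hij
    rw [← map_mul, Ideal.Quotient.eq_zero_iff_mem, mul_mul_mul_comm]
    exact Ideal.mul_mem_left _ _ (X_mul_X_mem hij)

end truncIdeal

/-- In `K[x₁,…,x_k] / ⟨x_i^{f_i}, x_i x_j (i ≠ j)⟩` (with all `f_i ≥ 1`), the maximal
index of nilpotency of a nilpotent element equals `max_i f_i`. -/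
theorem max_nilpotency_index {K : Type*} [Field K] {k : ℕ} (hk : 0 < k)
    (f : Fin k → ℕ) (hf : ∀ i, 1 ≤ f i) :
    IsGreatest
      {m : ℕ | ∃ r : MvPolynomial (Fin k) K ⧸ truncIdeal K f,
        IsNilpotent r ∧ r ^ m = 0 ∧ ∀ l, r ^ l = 0 → m ≤ l}
      (Finset.univ.sup f) := by
  have hf₀ : ∀ i, f i ≠ 0 := fun i => Nat.one_le_iff_ne_zero.mp (hf i)
  obtain ⟨i₀, -, hi₀⟩ :=
    Finset.exists_mem_eq_sup Finset.univ (Finset.univ_nonempty_iff.mpr ⟨⟨0, hk⟩⟩) f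
  have hx (l : ℕ) :
      Ideal.Quotient.mk (truncIdeal K f) (X i₀) ^ l = 0 ↔ Finset.univ.sup f ≤ l := by
    rw [← map_pow, Ideal.Quotient.eq_zero_iff_mem, truncIdeal.X_pow_mem_iff hf₀, hi₀]
  refine ⟨⟨_, ⟨_, (hx _).mpr le_rfl⟩, (hx _).mpr le_rfl, fun l => (hx l).mp⟩, ?_⟩
  rintro m ⟨r, hr, -, hmin⟩
  exact hmin _ (truncIdeal.pow_eq_zero_of_isNilpotent hf₀ hr
    (fun i => Finset.le_sup (Finset.mem_univ i)) (hi₀ ▸ hf₀ i₀))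
end

section
/- Let K be a field and f₁,…,f_k, g₁,…,g_m integers with all f_i ≥ 2 and all g_j ≥ 2. If the K-algebras K[x₁,…,x_k]/⟨{x_i^{f_i}}, {x_i x_j}_{i≠j}⟩ and K[y₁,…,y_m]/⟨{y_j^{g_j}}, {y_i y_j}_{i≠j}⟩ are isomorphic as K-algebras, then k = m and the multisets {f₁,…,f_k} and {g₁,…,g_m} coincide. -/
namespace TruncAux

open MvPolynomial Finsupp

variable {K : Type*} [Field K] {k : ℕ} (f : Fin k → ℕ)

def expSet : Set (Fin k →₀ ℕ) :=
  (Set.range fun i => Finsupp.single i (f i)) ∪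
    {d | ∃ i j : Fin k, i ≠ j ∧ d = Finsupp.single i 1 + Finsupp.single j 1}

lemma truncIdeal_eq :
    truncIdeal K f = Ideal.span ((fun s => monomial s (1 : K)) '' expSet f) := by
  unfold truncIdeal expSet
  rw [Set.image_union]
  congr 1
  congr 1
  · rw [← Set.range_comp]
    refine congrArg _ (funext fun i => ?_)
    simp [Function.comp, X_pow_eq_monomial]
  · ext p
    constructor
    · rintro ⟨i, j, hij, rfl⟩
      exact ⟨_, ⟨i, j, hij, rfl⟩, by rw [X, X, monomial_mul, one_mul]⟩
    · rintro ⟨d, ⟨i, j, hij, rfl⟩, rfl⟩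
      exact ⟨i, j, hij, by rw [X, X, monomial_mul, one_mul]⟩

lemma mem_truncIdeal_iff {p : MvPolynomial (Fin k) K} :
    p ∈ truncIdeal K f ↔ ∀ d ∈ p.support, ∃ s ∈ expSet f, s ≤ d := by
  rw [truncIdeal_eq, mem_ideal_span_monomial_image]

lemma good_single (hf : ∀ i, 2 ≤ f i) {i : Fin k} {a : ℕ} (ha1 : 1 ≤ a) (ha2 : a < f i) :
    ¬ ∃ s ∈ expSet f, s ≤ Finsupp.single i a := by
  rintro ⟨s, hs, hle⟩
  rcases hs with ⟨i', rfl⟩ | ⟨i', j, hij, rfl⟩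
  · have h1 := hle i'
    rw [Finsupp.single_eq_same] at h1
    have hii : i = i' := by
      by_contra hne
      rw [Finsupp.single_eq_of_ne' hne] at h1
      have := hf i'; omega
    subst hii
    rw [Finsupp.single_eq_same] at h1
    omega
  · have h1 := hle i'
    have h2 := hle j
    rw [Finsupp.add_apply, Finsupp.single_eq_same, Finsupp.single_eq_of_ne' (Ne.symm hij)] at h1
    rw [Finsupp.add_apply, Finsupp.single_eq_same, Finsupp.single_eq_of_ne' hij] at h2
    have hii : i = i' := by
      by_contra hne; rw [Finsupp.single_eq_of_ne' hne] at h1; omega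
    have hij2 : i = j := by
      by_contra hne; rw [Finsupp.single_eq_of_ne' hne] at h2; omega
    exact hij (hii ▸ hij2 ▸ rfl)

lemma one_not_mem (hf : ∀ i, 2 ≤ f i) : (1 : MvPolynomial (Fin k) K) ∉ truncIdeal K f := by
  rw [mem_truncIdeal_iff]
  intro h
  obtain ⟨s, hs, hle⟩ := h 0 ((MvPolynomial.mem_support_iff).2 (by simp))
  have hs0 : s = 0 := le_antisymm hle (zero_le : 0 ≤ s)
  subst hs0
  rcases hs with ⟨i, hi⟩ | ⟨i, j, hij, hd⟩
  · rw [Finsupp.single_eq_zero] at hi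
    have := hf i; omega
  · have := congrArg (fun d => d i) hd
    simp [Finsupp.single_eq_of_ne' (Ne.symm hij)] at this

end TruncAux
set_option synthInstance.maxHeartbeats 1000000
section TruncAux2
open MvPolynomial Finsupp TruncAux

variable {K : Type*} [Field K] {k : ℕ} (f : Fin k → ℕ)

local notation "π" => Ideal.Quotient.mk (truncIdeal K f)

lemma ne_top (hf : ∀ i, 2 ≤ f i) : truncIdeal K f ≠ ⊤ :=
  (Ideal.ne_top_iff_one _).2 (one_not_mem f hf)

lemma mk_X_pow_self (i : Fin k) : π (X i ^ f i) = 0 :=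
  Ideal.Quotient.eq_zero_iff_mem.2 <|
    Ideal.subset_span (Set.mem_union_left _ ⟨i, rfl⟩)

lemma mk_X_pow_of_le {i : Fin k} {a : ℕ} (h : f i ≤ a) : π (X i ^ a) = 0 := by
  have : (X i ^ a : MvPolynomial (Fin k) K) = X i ^ f i * X i ^ (a - f i) := by
    rw [← pow_add, Nat.add_sub_cancel' h]
  rw [this, map_mul, mk_X_pow_self f i, zero_mul]

lemma mk_X_mul_X {i j : Fin k} (h : i ≠ j) : π (X i * X j) = 0 :=
  Ideal.Quotient.eq_zero_iff_mem.2 <|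
    Ideal.subset_span (Set.mem_union_right _ ⟨i, j, h, rfl⟩)

lemma mk_mixed {i j : Fin k} (h : i ≠ j) (a b : ℕ) :
    π (X i ^ (a + 1)) * π (X j ^ (b + 1)) = 0 := by
  rw [← map_mul]
  have : (X i ^ (a + 1) * X j ^ (b + 1) : MvPolynomial (Fin k) K) = X i ^ a * X j ^ b * (X i * X j) := by ring
  rw [this, map_mul, mk_X_mul_X f h, mul_zero]

lemma span_le_nilradical :
    Ideal.span (Set.range fun i => π (X i)) ≤
      nilradical (MvPolynomial (Fin k) K ⧸ truncIdeal K f) := by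
  rw [Ideal.span_le]
  rintro _ ⟨i, rfl⟩
  exact mem_nilradical.2 ⟨f i, by rw [← map_pow, mk_X_pow_self]⟩

lemma nilradical_eq_span (hf : ∀ i, 2 ≤ f i) :
    nilradical (MvPolynomial (Fin k) K ⧸ truncIdeal K f) =
      Ideal.span (Set.range fun i => π (X i)) := by
  haveI : Nontrivial (MvPolynomial (Fin k) K ⧸ truncIdeal K f) :=
    Ideal.Quotient.nontrivial_iff.mpr (ne_top f hf)
  refine le_antisymm ?_ (span_le_nilradical f)
  intro x hx
  obtain ⟨p, rfl⟩ := Ideal.Quotient.mk_surjective x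
  set c : K := coeff 0 p with hc
  set q : MvPolynomial (Fin k) K := p - C c with hq
  have hqmem : π q ∈ Ideal.span (Set.range fun i => π (X i)) := by
    have hq0 : q ∈ Ideal.span (X '' (Set.univ : Set (Fin k)) :
        Set (MvPolynomial (Fin k) K)) := by
      rw [mem_ideal_span_X_image]
      intro m hm
      have hm0 : m ≠ 0 := by
        intro h0
        rw [MvPolynomial.mem_support_iff, h0, hq] at hm
        simp [hc] at hm
      obtain ⟨i, hi⟩ : ∃ i, m i ≠ 0 := by
        by_contra hcon
        push_neg at hcon
        exact hm0 (Finsupp.ext hcon)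
      exact ⟨i, Set.mem_univ i, hi⟩
    have := Ideal.mem_map_of_mem π hq0
    rwa [Ideal.map_span, Set.image_image, Set.image_univ] at this
  have hnq : π q ∈ nilradical _ := span_le_nilradical f hqmem
  have hCc : IsNilpotent (π (C c)) := by
    have : π (C c) = π p - π q := by rw [hq, map_sub, sub_sub_cancel]
    rw [this]
    exact (Commute.all _ _).isNilpotent_sub hx hnq
  have hc0 : c = 0 := by
    by_contra hc0
    obtain ⟨n, hn⟩ := hCc
    have h1 : (1 : MvPolynomial (Fin k) K ⧸ truncIdeal K f) = 0 := by
      have : π (C c) * π (C c⁻¹) = 1 := by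
        rw [← map_mul, ← C_mul, mul_inv_cancel₀ hc0, C_1, map_one]
      calc (1 : MvPolynomial (Fin k) K ⧸ truncIdeal K f)
          = (π (C c) * π (C c⁻¹)) ^ n := by rw [this, one_pow]
        _ = (π (C c)) ^ n * (π (C c⁻¹)) ^ n := mul_pow _ _ _
        _ = 0 := by rw [hn, zero_mul]
    exact one_ne_zero h1
  have : π p = π q := by rw [hq, hc0, C_0, sub_zero]
  rwa [this]

end TruncAux2
set_option maxHeartbeats 1000000
section TruncAux3
open MvPolynomial Finsupp TruncAux

variable {K : Type*} [Field K] {k : ℕ} (f : Fin k → ℕ)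

local notation "π" => Ideal.Quotient.mk (truncIdeal K f)

lemma nilradical_pow (hf : ∀ i, 2 ≤ f i) :
    ∀ n, 1 ≤ n → nilradical (MvPolynomial (Fin k) K ⧸ truncIdeal K f) ^ n =
      Ideal.span (Set.range fun i => π (X i) ^ n) := by
  intro n hn
  induction n with
  | zero => omega
  | succ n ih =>
    rcases Nat.lt_or_ge n 1 with h1 | hn1
    · have : n = 0 := by omega
      subst this
      rw [pow_one, nilradical_eq_span f hf]
      simp only [Nat.zero_add, pow_one]
    · rw [pow_succ, ih hn1, nilradical_eq_span f hf, Ideal.span_mul_span']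
      refine le_antisymm (Ideal.span_le.2 ?_) (Ideal.span_le.2 ?_)
      · rintro x hx
        rw [Set.mem_mul] at hx
        obtain ⟨s, ⟨i, rfl⟩, t, ⟨j, rfl⟩, rfl⟩ := hx
        by_cases hij : i = j
        · subst hij
          exact Ideal.subset_span ⟨i, by simp [pow_succ]⟩
        · have h0 : π (X i) ^ n * π (X j) = 0 := by
            obtain ⟨n', rfl⟩ : ∃ n', n = n' + 1 := ⟨n - 1, by omega⟩
            rw [← map_pow]
            simpa using mk_mixed f hij n' 0
          rw [h0]
          exact Ideal.zero_mem _
      · rintro _ ⟨i, rfl⟩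
        show π (X i) ^ (n + 1) ∈ _
        rw [pow_succ]
        exact Ideal.subset_span (Set.mul_mem_mul ⟨i, rfl⟩ ⟨i, rfl⟩)

/-- The spanning set `{π (X i ^ (n + b))}`. -/
def genSet (n : ℕ) : Set (MvPolynomial (Fin k) K ⧸ truncIdeal K f) :=
  Set.range (fun q : Fin k × ℕ => π (X q.1 ^ (n + q.2)))

lemma mul_gen_mem {n : ℕ} (hn : 1 ≤ n) (p : MvPolynomial (Fin k) K) :
    ∀ (i : Fin k) (b : ℕ),
      π p * π (X i ^ (n + b)) ∈ Submodule.span K (genSet (K := K) f n) := by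
  induction p using MvPolynomial.induction_on with
  | C a =>
    intro i b
    have : π (C a) * π (X i ^ (n + b)) = a • π (X i ^ (n + b)) := by
      rw [← map_mul, ← smul_eq_C_mul]
      exact map_smul (Ideal.Quotient.mkₐ K (truncIdeal K f)) a _
    rw [this]
    exact Submodule.smul_mem _ _ (Submodule.subset_span ⟨(i, b), rfl⟩)
  | add p q hp hq =>
    intro i b
    rw [map_add, add_mul]
    exact Submodule.add_mem _ (hp i b) (hq i b)
  | mul_X p j hp =>
    intro i b
    rw [map_mul, mul_assoc]
    by_cases hij : j = i
    · subst hij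
      have : π (X j) * π (X j ^ (n + b)) = π (X j ^ (n + (b + 1))) := by
        rw [← map_mul]
        exact congrArg _ (by ring)
      rw [this]
      exact hp j (b + 1)
    · have : π (X j) * π (X i ^ (n + b)) = 0 := by
        obtain ⟨a', ha'⟩ : ∃ a', n + b = a' + 1 := ⟨n + b - 1, by omega⟩
        rw [ha', ← pow_one (X j)]
        simpa using mk_mixed f hij 0 a'
      rw [this, mul_zero]
      exact Submodule.zero_mem _

lemma restrict_eq {n : ℕ} (hn : 1 ≤ n) :
    Submodule.restrictScalars K (Ideal.span (Set.range fun i => π (X i) ^ n)) =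
      Submodule.span K (genSet (K := K) f n) := by
  apply le_antisymm
  · intro x hx
    refine Submodule.span_induction ?_ ?_ ?_ ?_ hx
    · rintro _ ⟨i, rfl⟩
      show π (X i) ^ n ∈ _
      have : π (X i) ^ n = π (X i ^ (n + 0)) := by rw [map_pow, Nat.add_zero]
      rw [this]
      exact Submodule.subset_span ⟨(i, 0), rfl⟩
    · exact Submodule.zero_mem _
    · exact fun x y _ _ hx hy => Submodule.add_mem _ hx hy
    · rintro a x _ hx'
      obtain ⟨p, rfl⟩ := Ideal.Quotient.mk_surjective a
      rw [smul_eq_mul]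
      have hmap : Submodule.span K (genSet (K := K) f n) ≤
          (Submodule.span K (genSet (K := K) f n)).comap (LinearMap.mulLeft K (π p)) := by
        rw [Submodule.span_le]
        rintro _ ⟨⟨i, b⟩, rfl⟩
        exact mul_gen_mem f hn p i b
      exact hmap hx'
  · rw [Submodule.span_le]
    rintro _ ⟨⟨i, b⟩, rfl⟩
    show π (X i ^ (n + b)) ∈ Ideal.span (Set.range fun i => π (X i) ^ n)
    have : π (X i ^ (n + b)) = π (X i ^ b) * π (X i) ^ n := by
      rw [← map_pow, ← map_mul, ← pow_add, add_comm b n]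
    rw [this]
    exact Ideal.mul_mem_left _ _ (Ideal.subset_span ⟨i, rfl⟩)

/-- The basis family for the `n`-th power of the nilradical. -/
noncomputable def basFam (n : ℕ) : (Σ i : Fin k, Fin (f i - n)) →
    MvPolynomial (Fin k) K ⧸ truncIdeal K f :=
  fun s => π (X s.1 ^ (n + s.2.1))

lemma span_genSet_eq (n : ℕ) :
    Submodule.span K (genSet (K := K) f n) = Submodule.span K (Set.range (basFam (K := K) f n)) := by
  apply le_antisymm
  · rw [Submodule.span_le]
    rintro _ ⟨⟨i, b⟩, rfl⟩
    show π (X i ^ (n + b)) ∈ _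
    by_cases hb : n + b < f i
    · exact Submodule.subset_span ⟨⟨i, ⟨b, by omega⟩⟩, rfl⟩
    · have : π (X i ^ (n + b)) = 0 := mk_X_pow_of_le f (by omega)
      rw [this]
      exact Submodule.zero_mem _
  · rw [Submodule.span_le]
    rintro _ ⟨⟨i, b⟩, rfl⟩
    exact Submodule.subset_span ⟨(i, b.1), rfl⟩

lemma basFam_li (hf : ∀ i, 2 ≤ f i) {n : ℕ} (hn : 1 ≤ n) :
    LinearIndependent K (basFam (K := K) f n) := by
  rw [Fintype.linearIndependent_iff]
  intro c hc s₀
  set q : MvPolynomial (Fin k) K :=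
    ∑ s : Σ i : Fin k, Fin (f i - n), C (c s) * X s.1 ^ (n + s.2.1) with hq
  have hπq : π q = 0 := by
    rw [hq, map_sum, ← hc]
    refine Finset.sum_congr rfl fun s _ => ?_
    rw [← smul_eq_C_mul]
    exact map_smul (Ideal.Quotient.mkₐ K (truncIdeal K f)) _ _
  have hqI : q ∈ truncIdeal K f := Ideal.Quotient.eq_zero_iff_mem.1 hπq
  have hcoeff : q.coeff (Finsupp.single s₀.1 (n + s₀.2.1)) = c s₀ := by
    rw [hq, MvPolynomial.coeff_sum]
    rw [Finset.sum_eq_single s₀]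
    · rw [coeff_C_mul, coeff_X_pow, if_pos rfl, mul_one]
    · intro s _ hs
      rw [coeff_C_mul, coeff_X_pow, if_neg, mul_zero]
      intro heq
      rcases Finsupp.single_eq_single_iff _ _ _ _ |>.1 heq with ⟨h1, h2⟩ | ⟨h1, _⟩
      · apply hs
        rcases s with ⟨i, b⟩
        rcases s₀ with ⟨i₀, b₀⟩
        dsimp at h1 h2
        subst h1
        congr 1
        exact Fin.ext (by omega)
      · omega
    · intro hs
      exact absurd (Finset.mem_univ s₀) hs
  by_contra hc0
  have hsupp : Finsupp.single s₀.1 (n + s₀.2.1) ∈ q.support :=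
    MvPolynomial.mem_support_iff.2 (by rw [hcoeff]; exact hc0)
  have hbad := (mem_truncIdeal_iff f).1 hqI _ hsupp
  have hfs := s₀.2.2
  exact good_single f hf (by omega) (by omega) hbad

lemma finrank_nilradical_pow (hf : ∀ i, 2 ≤ f i) {n : ℕ} (hn : 1 ≤ n) :
    Module.finrank K (Submodule.restrictScalars K
      (nilradical (MvPolynomial (Fin k) K ⧸ truncIdeal K f) ^ n)) = ∑ i, (f i - n) := by
  rw [nilradical_pow f hf n hn, restrict_eq f hn, span_genSet_eq f n,
    finrank_span_eq_card (basFam_li f hf hn)]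
  simp

end TruncAux3
section Transfer

variable {K : Type*} [Field K] {A B : Type*} [CommRing A] [CommRing B]
  [Algebra K A] [Algebra K B]

lemma map_nilradical (φ : A ≃ₐ[K] B) :
    Ideal.map (φ : A →+* B) (nilradical A) = nilradical B := by
  apply le_antisymm
  · rw [Ideal.map_le_iff_le_comap]
    intro x hx
    exact mem_nilradical.2 ((mem_nilradical.1 hx).map (φ : A →+* B))
  · intro y hy
    have h1 : IsNilpotent (φ.symm y) := (mem_nilradical.1 hy).map (φ.symm : B →+* A)
    have h2 := Ideal.mem_map_of_mem (φ : A →+* B) (mem_nilradical.2 h1)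
    simpa using h2

lemma restrict_map (φ : A ≃ₐ[K] B) (P : Ideal A) :
    Submodule.restrictScalars K (Ideal.map (φ : A →+* B) P) =
      Submodule.map (φ.toLinearMap) (Submodule.restrictScalars K P) := by
  ext y
  rw [Submodule.restrictScalars_mem,
    Ideal.mem_map_iff_of_surjective (φ : A →+* B) (fun y => ⟨φ.symm y, by simp⟩), Submodule.mem_map]
  constructor
  · rintro ⟨x, hx, rfl⟩
    exact ⟨x, hx, rfl⟩
  · rintro ⟨x, hx, rfl⟩
    exact ⟨x, hx, rfl⟩

lemma finrank_transfer (φ : A ≃ₐ[K] B) (n : ℕ) :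
    Module.finrank K (Submodule.restrictScalars K (nilradical B ^ n)) =
      Module.finrank K (Submodule.restrictScalars K (nilradical A ^ n)) := by
  rw [← map_nilradical φ, ← Ideal.map_pow, restrict_map]
  exact LinearEquiv.finrank_map_eq φ.toLinearEquiv _

end Transfer

section Comb

lemma cardGe_split {k : ℕ} (f : Fin k → ℕ) (t : ℕ) :
    (Finset.univ.filter fun i => t ≤ f i).card =
      (Finset.univ.filter fun i => t = f i).card +
        (Finset.univ.filter fun i => t + 1 ≤ f i).card := by
  rw [← Finset.card_union_of_disjoint (by
    rw [Finset.disjoint_left]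
    intro i hi1 hi2
    simp only [Finset.mem_filter, Finset.mem_univ, true_and] at hi1 hi2
    omega)]
  congr 1
  ext i
  simp only [Finset.mem_filter, Finset.mem_union, Finset.mem_univ, true_and]
  omega

lemma comb_main {k m : ℕ} (f : Fin k → ℕ) (g : Fin m → ℕ)
    (hf : ∀ i, 2 ≤ f i) (hg : ∀ j, 2 ≤ g j)
    (h : ∀ n, 1 ≤ n → (∑ i, (f i - n)) = ∑ j, (g j - n)) :
    k = m ∧ Multiset.map f Finset.univ.val = Multiset.map g Finset.univ.val := by
  have e1 : ∀ {k' : ℕ} (f' : Fin k' → ℕ) (t : ℕ), 2 ≤ t →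
      (Finset.univ.filter fun i => t ≤ f' i).card =
        (∑ i, (f' i - (t - 1))) - ∑ i, (f' i - t) := by
    intro k' f' t ht
    rw [Finset.card_filter, ← Finset.sum_tsub_distrib Finset.univ
      (fun i _ => tsub_le_tsub_left (by omega : t - 1 ≤ t) (f' i))]
    refine Finset.sum_congr rfl fun i _ => ?_
    by_cases hle : t ≤ f' i
    · rw [if_pos hle]; omega
    · rw [if_neg hle]; omega
  have hcard : ∀ t, 2 ≤ t →
      (Finset.univ.filter fun i => t ≤ f i).card =
        (Finset.univ.filter fun j => t ≤ g j).card := by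
    intro t ht
    rw [e1 f t ht, e1 g t ht, h (t - 1) (by omega), h t (by omega)]
  constructor
  · have h2 := hcard 2 le_rfl
    rwa [Finset.filter_true_of_mem (fun i _ => hf i),
      Finset.filter_true_of_mem (fun j _ => hg j),
      Finset.card_univ, Finset.card_univ, Fintype.card_fin, Fintype.card_fin] at h2
  · refine Multiset.ext.2 fun t => ?_
    rw [Multiset.count_map, Multiset.count_map]
    have hmc : ∀ {k' : ℕ} (f' : Fin k' → ℕ),
        Multiset.card (Multiset.filter (fun a => t = f' a) Finset.univ.val) =
          (Finset.univ.filter fun a => t = f' a).card := by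
      intro k' f'
      rw [Finset.card, Finset.filter_val]
    rw [hmc f, hmc g]
    by_cases ht : 2 ≤ t
    · have h1 := cardGe_split f t
      have h2 := cardGe_split g t
      have h3 := hcard t ht
      have h4 := hcard (t + 1) (by omega)
      omega
    · have hempty : ∀ {k' : ℕ} (f' : Fin k' → ℕ), (∀ i, 2 ≤ f' i) →
          (Finset.univ.filter fun a => t = f' a).card = 0 := by
        intro k' f' hf'
        rw [Finset.card_eq_zero, Finset.filter_eq_empty_iff]
        intro a _
        have := hf' a
        omega
      rw [hempty f hf, hempty g hg]

end Comb

/-- If `K[x₁,…,x_k]/⟨x_i^{f_i}, x_i x_j (i≠j)⟩ ≅ K[y₁,…,y_m]/⟨y_j^{g_j}, y_i y_j (i≠j)⟩`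
as `K`-algebras, with all `f_i, g_j ≥ 2`, then `k = m` and the multisets `{f_i}` and
`{g_j}` coincide. -/
theorem truncated_algebra_determines_multiplicities {K : Type*} [Field K]
    {k m : ℕ} (f : Fin k → ℕ) (g : Fin m → ℕ)
    (hf : ∀ i, 2 ≤ f i) (hg : ∀ j, 2 ≤ g j)
    (h : Nonempty ((MvPolynomial (Fin k) K ⧸ truncIdeal K f) ≃ₐ[K]
        (MvPolynomial (Fin m) K ⧸ truncIdeal K g))) :
    k = m ∧ Multiset.map f Finset.univ.val = Multiset.map g Finset.univ.val := by
  obtain ⟨φ⟩ := h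
  refine comb_main f g hf hg ?_
  intro n hn
  rw [← finrank_nilradical_pow (K := K) f hf hn, ← finrank_nilradical_pow (K := K) g hg hn]
  exact (finrank_transfer φ n).symm
end

section
/- Let d₁,…,d_g be positive integers with g ≥ 2 such that d₁ + ⋯ + d_g = 2g - 2, and let V₁, V₂ be two indices such that not both d_{V₁} = 1 and d_{V₂} = 1 hold (i.e., at least one of d_{V₁}, d_{V₂} is ≥ 2). Then there exists a tree on vertex set {1,…,g} realizing this degree sequence in which V₁ and V₂ are adjacent. -/
open Finset SimpleGraph

namespace TreeDegSeq

variable (c : ℕ → ℕ)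

def S (v : ℕ) : ℕ := ∑ u ∈ Finset.range v, c u

lemma S_mono : Monotone (S c) := fun _ _ h =>
  Finset.sum_le_sum_of_subset (Finset.range_subset_range.2 h)

def f (n k : ℕ) : ℕ := ((Finset.range n).filter (fun v => S c (v+1) ≤ k)).card

lemma f_lt {n i k : ℕ} (hk : k < S c i) : f c n k < i := by
  have hi : 1 ≤ i := by
    rcases Nat.eq_zero_or_pos i with h | h
    · subst h; simp [S] at hk
    · exact h
  have hsub : (Finset.range n).filter (fun v => S c (v+1) ≤ k) ⊆ Finset.range (i-1) := by
    intro v hv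
    simp only [Finset.mem_filter, Finset.mem_range] at hv ⊢
    by_contra hvi
    push_neg at hvi
    have : i ≤ v + 1 := by omega
    exact absurd (le_trans (S_mono c this) hv.2) (by omega)
  calc f c n k ≤ (Finset.range (i-1)).card := Finset.card_le_card hsub
    _ = i - 1 := Finset.card_range _
    _ < i := by omega

lemma lt_f {n v k : ℕ} (hv : v < n) (h : S c (v+1) ≤ k) : v < f c n k := by
  have hsub : Finset.range (v+1) ⊆ (Finset.range n).filter (fun v => S c (v+1) ≤ k) := by
    intro u hu
    simp only [Finset.mem_range] at hu
    simp only [Finset.mem_filter, Finset.mem_range]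
    exact ⟨by omega, le_trans (S_mono c (by omega)) h⟩
  have h2 : v + 1 ≤ f c n k := by
    simpa only [f, Finset.card_range] using Finset.card_le_card hsub
  omega

lemma f_eq {n v k : ℕ} (hv : v < n) (h1 : S c v ≤ k) (h2 : k < S c (v+1)) :
    f c n k = v := by
  have hle : f c n k < v + 1 := f_lt c h2
  rcases Nat.eq_zero_or_pos v with h | h
  · omega
  · have : v - 1 < f c n k := lt_f c (by omega) (by
      have : v - 1 + 1 = v := by omega
      rw [this]; exact h1)
    omega

lemma f_eq_iff {n v k : ℕ} (hv : v < n) :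
    f c n k = v ↔ S c v ≤ k ∧ k < S c (v+1) := by
  constructor
  · intro h
    constructor
    · by_contra hc'
      push_neg at hc'
      have := f_lt c (n := n) (k := k) hc'
      omega
    · by_contra hc'
      push_neg at hc'
      have := lt_f c hv hc'
      omega
  · intro ⟨h1, h2⟩
    exact f_eq c hv h1 h2

lemma fiber_card {n v : ℕ} (hv : v < n) (hS : S c n = n - 1) :
    ((Finset.range (n-1)).filter (fun k => f c n k = v)).card = c v := by
  have hSn : S c (v+1) ≤ n - 1 := hS ▸ S_mono c (by omega)
  have : (Finset.range (n-1)).filter (fun k => f c n k = v)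
      = Finset.Ico (S c v) (S c (v+1)) := by
    ext k
    simp only [Finset.mem_filter, Finset.mem_range, Finset.mem_Ico]
    constructor
    · intro ⟨_, hf⟩
      exact (f_eq_iff c hv).1 hf
    · intro ⟨h1, h2⟩
      exact ⟨by omega, f_eq c hv h1 h2⟩
  rw [this, Nat.card_Ico]
  simp [S, Finset.sum_range_succ]

/-- The child-count function. -/
def cfun (n : ℕ) (d' : Fin n → ℕ) : ℕ → ℕ := fun k =>
  if h : k < n then (if k = 0 then d' ⟨k, h⟩ else d' ⟨k, h⟩ - 1) else 0

lemma core (n : ℕ) [NeZero n] (hn : 2 ≤ n) (d' : Fin n → ℕ) (hd : ∀ i, 1 ≤ d' i)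
    (hsum : ∑ i, d' i = 2 * n - 2)
    (hpre : ∀ i : ℕ, 1 ≤ i → i < n → i ≤ S (cfun n d') i) :
    ∃ G : SimpleGraph (Fin n), G.IsTree ∧
      (∀ v, Nat.card {j : Fin n | G.Adj v j} = d' v) ∧ G.Adj 0 1 := by
  classical
  set c := cfun n d' with hc
  -- basic facts on c
  have hc0 : c 0 = d' 0 := by
    simp only [hc, cfun, dif_pos (show 0 < n by omega), if_pos rfl]
    congr 1
  have hck : ∀ (i : Fin n), i ≠ 0 → c (i : ℕ) = d' i - 1 := by
    intro i hi
    have hv : (i : ℕ) ≠ 0 := fun h => hi (Fin.ext (by simp [h]))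
    simp only [hc, cfun, dif_pos i.isLt, if_neg hv]
  -- total sum
  have hStot : S c n = n - 1 := by
    have h1 : S c n = ∑ i : Fin n, (if (i : ℕ) = 0 then d' i else d' i - 1) := by
      rw [S, ← Fin.sum_univ_eq_sum_range (fun k => c k) n]
      apply Finset.sum_congr rfl
      intro i _
      by_cases h : (i : ℕ) = 0
      · have hi : i = 0 := Fin.ext (by simpa using h)
        subst hi
        simpa using hc0
      · rw [hck i (fun hh => h (by simp [hh])), if_neg h]
    have h2 : ∀ i : Fin n, (if (i : ℕ) = 0 then d' i else d' i - 1)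
        + (if (i : ℕ) = 0 then 0 else 1) = d' i := by
      intro i
      have := hd i
      split <;> omega
    have h3 : ∑ i : Fin n, ((if (i : ℕ) = 0 then d' i else d' i - 1)
        + (if (i : ℕ) = 0 then 0 else 1)) = 2 * n - 2 := by
      rw [Finset.sum_congr rfl (fun i _ => h2 i)]; exact hsum
    rw [Finset.sum_add_distrib] at h3
    have h4 : ∑ i : Fin n, (if (i : ℕ) = 0 then 0 else 1) = n - 1 := by
      have he : ∀ i : Fin n, (if (i : ℕ) = 0 then 0 else 1)
          = if ¬((i : ℕ) = 0) then 1 else 0 := by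
        intro i; by_cases h : (i : ℕ) = 0 <;> simp [h]
      rw [Finset.sum_congr rfl (fun i _ => he i), Finset.sum_boole]
      have h5 : (Finset.univ.filter fun i : Fin n => ¬((i : ℕ) = 0))
          = Finset.univ.erase 0 := by
        ext i
        simp
      rw [h5, Finset.card_erase_of_mem (Finset.mem_univ 0), Finset.card_univ,
        Fintype.card_fin, Nat.cast_id]
    rw [h1]
    omega
  have hc0ge : 1 ≤ c 0 := hc0 ▸ hd 0
  -- the parent function
  have hfbound : ∀ i : Fin n, (i : ℕ) ≠ 0 → f c n ((i : ℕ) - 1) < (i : ℕ) := by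
    intro i hi
    apply f_lt
    have := hpre (i : ℕ) (by omega) i.isLt
    omega
  let P : Fin n → Fin n := fun i =>
    if h : (i : ℕ) = 0 then 0
    else ⟨f c n ((i : ℕ) - 1), lt_trans (hfbound i h) i.isLt⟩
  have hP0 : P 0 = 0 := by simp [P]
  have hPval : ∀ i : Fin n, (i : ℕ) ≠ 0 → (P i : ℕ) = f c n ((i : ℕ) - 1) := by
    intro i hi; simp only [P, dif_neg hi]
  have hPlt : ∀ i : Fin n, i ≠ 0 → (P i : ℕ) < (i : ℕ) := by
    intro i hi
    have hi' : (i : ℕ) ≠ 0 := by simpa using hi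
    rw [hPval i hi']; exact hfbound i hi'
  -- the graph
  let G : SimpleGraph (Fin n) :=
    { Adj := fun a b => a ≠ b ∧ (P a = b ∨ P b = a)
      symm := by
        refine ⟨?_⟩; rintro a b ⟨hab, h⟩
        exact ⟨hab.symm, h.symm⟩
      loopless := by
        refine ⟨?_⟩; rintro a ⟨h, _⟩
        exact h rfl }
  have hAdjIff : ∀ a b, G.Adj a b ↔ a ≠ b ∧ (P a = b ∨ P b = a) := fun _ _ => Iff.rfl
  have hadjP : ∀ a : Fin n, a ≠ 0 → G.Adj a (P a) := by
    intro a h0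
    have hlt := hPlt a h0
    refine (hAdjIff _ _).2 ⟨fun h => ?_, Or.inl rfl⟩
    rw [← h] at hlt
    exact absurd hlt (lt_irrefl _)
  have hnbr : ∀ a b : Fin n, G.Adj a b → (b : ℕ) < (a : ℕ) → b = P a ∧ a ≠ 0 := by
    intro a b hab hba
    obtain ⟨hne, h⟩ := (hAdjIff a b).1 hab
    have ha0 : a ≠ 0 := by
      intro h0
      subst h0
      simp at hba
    rcases h with h | h
    · exact ⟨h.symm, ha0⟩
    · exfalso
      have hb0 : b ≠ 0 := by
        intro h0
        subst h0
        rw [hP0] at h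
        subst h
        simp at hba
      have := hPlt b hb0
      rw [h] at this
      omega
  -- reachability
  have hreach : ∀ m : ℕ, ∀ a : Fin n, (a : ℕ) ≤ m → G.Reachable a 0 := by
    intro m
    induction m with
    | zero =>
      intro a ha
      have : a = 0 := Fin.ext (by simpa using Nat.le_zero.mp ha)
      subst this
      rfl
    | succ m ih =>
      intro a ha
      by_cases h0 : a = 0
      · subst h0; rfl
      · have hlt := hPlt a h0
        exact (hadjP a h0).reachable.trans (ih (P a) (by omega))
  have hconn : G.Connected := by
    rw [SimpleGraph.connected_iff]
    exact ⟨fun a b => (hreach _ a le_rfl).trans (hreach _ b le_rfl).symm, ⟨0⟩⟩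
  -- acyclicity
  have hacyc : G.IsAcyclic := by
    intro v w hw
    have hsne : w.support.toFinset.Nonempty :=
      ⟨v, List.mem_toFinset.2 w.start_mem_support⟩
    set m := w.support.toFinset.max' hsne with hm
    have hmax : ∀ x ∈ w.support, x ≤ m :=
      fun x hx => Finset.le_max' _ x (List.mem_toFinset.2 hx)
    have hmmem : m ∈ w.support := List.mem_toFinset.1 (Finset.max'_mem _ hsne)
    have hc2 : (w.rotate m hmmem).IsCycle := hw.rotate hmmem
    have hsup2 : ∀ x ∈ (w.rotate m hmmem).support, x ≤ m := by
      intro x hx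
      rw [Walk.support_eq_cons] at hx
      rcases List.mem_cons.mp hx with rfl | hx
      · exact le_rfl
      · exact hmax x (List.mem_of_mem_tail
          (((Walk.support_rotate w m hmmem).mem_iff).mp hx))
    obtain ⟨b, hmb, q, hq⟩ := (Walk.not_nil_iff).mp hc2.not_nil
    have hlen : 3 ≤ q.length + 1 := by
      have := hc2.three_le_length
      rw [hq, Walk.length_cons] at this
      omega
    rw [hq] at hc2 hsup2
    have hcyc := hc2
    rw [Walk.cons_isCycle_iff] at hc2
    obtain ⟨hqp, hqe⟩ := hc2
    have hb_lt : (b : ℕ) < (m : ℕ) := by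
      have hble : b ≤ m := hsup2 b (by
        rw [Walk.support_cons]
        exact List.mem_cons_of_mem _ q.start_mem_support)
      exact Fin.lt_def.mp (lt_of_le_of_ne hble hmb.ne')
    obtain ⟨hbP, hm0⟩ := hnbr m b hmb hb_lt
    have hqrev : ¬ q.reverse.Nil := by
      rw [Walk.not_nil_iff_lt_length, Walk.length_reverse]
      omega
    obtain ⟨y, hmy, r, hr⟩ := Walk.not_nil_iff.mp hqrev
    have hy_mem_q : y ∈ q.support := by
      have : y ∈ q.reverse.support := by
        rw [hr, Walk.support_cons]
        exact List.mem_cons_of_mem _ r.start_mem_support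
      rwa [Walk.support_reverse, List.mem_reverse] at this
    have hyle : y ≤ m := hsup2 y (by
      rw [Walk.support_cons]
      exact List.mem_cons_of_mem _ hy_mem_q)
    have hyne : y ≠ m := by
      have hrp : q.reverse.IsPath := hqp.reverse
      rw [hr, Walk.cons_isPath_iff] at hrp
      rintro rfl
      exact hrp.2 r.start_mem_support
    have hy_lt : (y : ℕ) < (m : ℕ) := Fin.lt_def.mp (lt_of_le_of_ne hyle hyne)
    obtain ⟨hyP, -⟩ := hnbr m y hmy hy_lt
    have hedge : s(m, y) ∈ q.edges := by
      have : s(m, y) ∈ q.reverse.edges := by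
        rw [hr, Walk.edges_cons]
        exact List.mem_cons_self
      rwa [Walk.edges_reverse, List.mem_reverse] at this
    apply hqe
    have heq : s(m, b) = s(m, y) := by rw [hbP, hyP]
    rw [heq]
    exact hedge
  -- child counts
  have hchild : ∀ v : Fin n,
      (Finset.univ.filter (fun b : Fin n => b ≠ 0 ∧ P b = v)).card = c (v : ℕ) := by
    intro v
    rw [← fiber_card c v.isLt hStot]
    refine Finset.card_bij (fun b _ => (b : ℕ) - 1) ?_ ?_ ?_
    · intro b hb
      simp only [Finset.mem_filter, Finset.mem_univ, true_and] at hb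
      obtain ⟨hb0, hbP⟩ := hb
      have hb0' : (b : ℕ) ≠ 0 := by simpa using hb0
      simp only [Finset.mem_filter, Finset.mem_range]
      have hval := hPval b hb0'
      rw [hbP] at hval
      have := b.isLt
      exact ⟨by omega, hval.symm⟩
    · intro a ha b hb hab
      simp only [Finset.mem_filter, Finset.mem_univ, true_and] at ha hb
      have ha0 : (a : ℕ) ≠ 0 := by simpa using ha.1
      have hb0 : (b : ℕ) ≠ 0 := by simpa using hb.1
      exact Fin.ext (by omega)
    · intro k hk
      simp only [Finset.mem_filter, Finset.mem_range] at hk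
      refine ⟨⟨k + 1, by omega⟩, ?_, by simp⟩
      simp only [Finset.mem_filter, Finset.mem_univ, true_and]
      constructor
      · intro h
        simpa using congrArg Fin.val h
      · apply Fin.ext
        rw [hPval ⟨k + 1, by omega⟩ (by simp)]
        simpa using hk.2
  -- degree computation
  have hcard : ∀ v : Fin n, Nat.card {j | G.Adj v j}
      = (Finset.univ.filter (fun j => G.Adj v j)).card := by
    intro v
    rw [Nat.card_coe_set_eq, Set.ncard_eq_toFinset_card']
    congr 1
    ext j
    simp [Set.mem_toFinset]
  have hnbrfin : ∀ v : Fin n,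
      (Finset.univ.filter (fun j => G.Adj v j)).card
        = (if v = 0 then 0 else 1) + c (v : ℕ) := by
    intro v
    by_cases hv : v = 0
    · subst hv
      rw [if_pos rfl, zero_add, ← hchild 0]
      congr 1
      ext b
      simp only [Finset.mem_filter, Finset.mem_univ, true_and]
      constructor
      · rintro ⟨hne, h | h⟩
        · rw [hP0] at h
          exact absurd h hne
        · refine ⟨fun hb => ?_, h⟩
          subst hb
          exact hne rfl
      · rintro ⟨hb0, hPb⟩
        exact ⟨fun h => hb0 h.symm, Or.inr hPb⟩
    · rw [if_neg hv]
      have hsplit : Finset.univ.filter (fun j => G.Adj v j)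
          = insert (P v) (Finset.univ.filter (fun b : Fin n => b ≠ 0 ∧ P b = v)) := by
        ext b
        simp only [Finset.mem_insert, Finset.mem_filter, Finset.mem_univ, true_and]
        constructor
        · rintro ⟨hne, h | h⟩
          · exact Or.inl h.symm
          · right
            refine ⟨fun hb => ?_, h⟩
            subst hb
            rw [hP0] at h
            exact hv h.symm
        · rintro (rfl | ⟨hb0, hPb⟩)
          · exact ((hAdjIff _ _).1 (hadjP v hv)).imp id id
          · have := hPlt b hb0
            rw [hPb] at this
            exact ⟨fun h => by subst h; omega, Or.inr hPb⟩
      rw [hsplit, Finset.card_insert_of_notMem, hchild, add_comm]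
      simp only [Finset.mem_filter, Finset.mem_univ, true_and, not_and]
      intro hPv0 hPPv
      have h1 := hPlt v hv
      have h2 := hPlt (P v) hPv0
      rw [hPPv] at h2
      omega
  have hdeg : ∀ v : Fin n, Nat.card {j | G.Adj v j} = d' v := by
    intro v
    rw [hcard, hnbrfin]
    by_cases hv : v = 0
    · subst hv
      rw [if_pos rfl, zero_add]
      simpa using hc0
    · rw [if_neg hv, hck v hv]
      have := hd v
      omega
  -- adjacency of 0 and 1
  have h1v : ((1 : Fin n) : ℕ) = 1 := by
    rw [Fin.val_one']
    exact Nat.mod_eq_of_lt (by omega)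
  have hP1 : P 1 = 0 := by
    apply Fin.ext
    rw [hPval 1 (by rw [h1v]; omega), h1v]
    simp only [Fin.val_zero]
    apply f_eq c (show 0 < n by omega)
    · simp [S]
    · show 0 < S c 1
      have : S c 1 = c 0 := by simp [S]
      omega
  have h01 : G.Adj 0 1 := by
    have h10 : G.Adj 1 0 := by
      refine (hAdjIff _ _).2 ⟨fun h => ?_, Or.inl hP1⟩
      rw [Fin.ext_iff, h1v] at h
      simp at h
    exact h10.symm
  exact ⟨G, ⟨hconn, hacyc⟩, hdeg, h01⟩

def dext (g : ℕ) (d' : Fin g → ℕ) : ℕ → ℕ := fun k => if h : k < g then d' ⟨k, h⟩ else 0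

lemma hind (i : ℕ) : ∑ k ∈ Finset.range i, (if k = 0 then 0 else 1) = i - 1 := by
  induction i with
  | zero => simp
  | succ i ih =>
    rw [Finset.sum_range_succ, ih]
    by_cases h : i = 0 <;> simp [h] <;> omega

lemma S_cfun_add (g : ℕ) (d' : Fin g → ℕ) (hd : ∀ i, 1 ≤ d' i) (i : ℕ) (hi : i ≤ g) :
    S (cfun g d') i + (i - 1) = ∑ k ∈ Finset.range i, dext g d' k := by
  rw [S, ← hind i, ← Finset.sum_add_distrib]
  apply Finset.sum_congr rfl
  intro k hk
  rw [Finset.mem_range] at hk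
  have hkg : k < g := by omega
  have h1 := hd ⟨k, hkg⟩
  simp only [cfun, dext, dif_pos hkg]
  split_ifs with h
  · omega
  · omega

lemma sum_dext (g : ℕ) (d' : Fin g → ℕ) :
    ∑ k ∈ Finset.range g, dext g d' k = ∑ j, d' j := by
  rw [← Fin.sum_univ_eq_sum_range (fun k => dext g d' k) g]
  apply Finset.sum_congr rfl
  intro j _
  simp [dext, j.isLt]

end TreeDegSeq

/-- Any sequence of positive integers `d₁,…,d_g` (with `g ≥ 2`) summing to `2g - 2` can
be realized as the degree sequence of a tree on `{1,…,g}` in which two prescribed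
distinct vertices `V₁, V₂` are adjacent, provided they are not both required to be
leaves. -/
theorem tree_degree_sequence_realizable_adjacent (g : ℕ) (hg : 2 ≤ g) (d : Fin g → ℕ)
    (hd : ∀ i, 1 ≤ d i) (hsum : ∑ i, d i = 2 * g - 2)
    (V₁ V₂ : Fin g) (hne : V₁ ≠ V₂) (hleaf : ¬(d V₁ = 1 ∧ d V₂ = 1)) :
    ∃ T : SimpleGraph (Fin g), T.IsTree ∧
      (∀ i, Nat.card {j : Fin g | T.Adj i j} = d i) ∧ T.Adj V₁ V₂ := by
  classical
  haveI : NeZero g := ⟨by omega⟩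
  obtain ⟨A, B, hAB, hA2⟩ :
      ∃ A B, ((A = V₁ ∧ B = V₂) ∨ (A = V₂ ∧ B = V₁)) ∧ 2 ≤ d A := by
    rcases Nat.lt_or_ge (d V₁) 2 with h | h
    · have h1 := hd V₁
      have h2 := hd V₂
      have : 2 ≤ d V₂ := by
        by_contra h3
        exact hleaf ⟨by omega, by omega⟩
      exact ⟨V₂, V₁, Or.inr ⟨rfl, rfl⟩, this⟩
    · exact ⟨V₁, V₂, Or.inl ⟨rfl, rfl⟩, h⟩
  have hABne : A ≠ B := by rcases hAB with ⟨rfl, rfl⟩ | ⟨rfl, rfl⟩ <;> [exact hne; exact hne.symm]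
  have hdle : ∀ i, d i ≤ 2 * g - 2 := by
    intro i
    rw [← hsum]
    exact Finset.single_le_sum (f := d) (fun _ _ => Nat.zero_le _) (Finset.mem_univ i)
  -- sorting key
  have hzero_le : ∀ x : Fin g, (0 : Fin g) ≤ x := fun x => by
    rw [Fin.le_def]; simp
  set key : Fin g → ℕ := fun i => if i = A then 0 else if i = B then 1 else 2 * g + 2 - d i
    with hkeydef
  have hkeyA : key A = 0 := by simp [hkeydef]
  have hkeyB : key B = 1 := by simp [hkeydef, hABne.symm]
  have hkeyO : ∀ i, i ≠ A → i ≠ B → key i = 2 * g + 2 - d i := by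
    intro i h1 h2; simp [hkeydef, h1, h2]
  have hkeyO4 : ∀ i, i ≠ A → i ≠ B → 4 ≤ key i := by
    intro i h1 h2
    rw [hkeyO i h1 h2]
    have := hdle i
    omega
  set σ : Equiv.Perm (Fin g) := Tuple.sort key with hσdef
  have hmono : Monotone (key ∘ σ) := Tuple.monotone_sort key
  have hσ0 : σ 0 = A := by
    have h1 : key (σ 0) ≤ key (σ (σ.symm A)) := hmono (hzero_le _)
    rw [Equiv.apply_symm_apply, hkeyA, Nat.le_zero] at h1
    by_contra h
    by_cases h2 : σ 0 = B
    · rw [h2, hkeyB] at h1; omega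
    · have := hkeyO4 _ h h2; omega
  have h1g : 1 < g := by omega
  have hone : ((1 : Fin g) : ℕ) = 1 := by
    rw [Fin.val_one']
    exact Nat.mod_eq_of_lt h1g
  have hone_ne : (1 : Fin g) ≠ 0 := by
    intro h
    have := congrArg Fin.val h
    rw [hone] at this
    simp at this
  have hσ1 : σ 1 = B := by
    have hj1 : σ.symm B ≠ 0 := by
      intro h
      apply hABne
      rw [← hσ0, ← h, Equiv.apply_symm_apply]
    have hle : (1 : Fin g) ≤ σ.symm B := by
      rw [Fin.le_def, hone]
      have : (σ.symm B : ℕ) ≠ 0 := by simpa using hj1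
      omega
    have h1 : key (σ 1) ≤ key (σ (σ.symm B)) := hmono hle
    rw [Equiv.apply_symm_apply, hkeyB] at h1
    have hσ1A : σ 1 ≠ A := by
      intro h
      rw [← hσ0] at h
      exact hone_ne (σ.injective h)
    by_contra h
    have := hkeyO4 _ hσ1A h
    omega
  have hdesc : ∀ j k : Fin g, 2 ≤ (j : ℕ) → (j : ℕ) ≤ (k : ℕ) → d (σ k) ≤ d (σ j) := by
    intro j k hj hjk
    have hjA : σ j ≠ A := by
      intro h; rw [← hσ0] at h
      have := σ.injective h
      rw [this] at hj; simp at hj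
    have hjB : σ j ≠ B := by
      intro h; rw [← hσ1] at h
      have := σ.injective h
      rw [this, hone] at hj; omega
    have hkA : σ k ≠ A := by
      intro h; rw [← hσ0] at h
      have := σ.injective h
      rw [this] at hjk; simp at hjk; simp [hjk] at hj
    have hkB : σ k ≠ B := by
      intro h; rw [← hσ1] at h
      have := σ.injective h
      rw [this, hone] at hjk; omega
    have hm : key (σ j) ≤ key (σ k) := hmono (Fin.le_def.mpr hjk)
    rw [hkeyO _ hjA hjB, hkeyO _ hkA hkB] at hm
    have := hdle (σ j)
    have := hdle (σ k)
    omega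
  -- the permuted degree sequence
  set d' : Fin g → ℕ := fun p => d (σ p) with hd'def
  have hd' : ∀ p, 1 ≤ d' p := fun p => hd _
  have hsum' : ∑ p, d' p = 2 * g - 2 := by
    rw [hd'def, Equiv.sum_comp σ d, hsum]
  have hdext : ∀ (k : ℕ) (h : k < g), TreeDegSeq.dext g d' k = d (σ ⟨k, h⟩) := by
    intro k h
    simp [TreeDegSeq.dext, h, hd'def]
  have hdext0 : TreeDegSeq.dext g d' 0 = d A := by
    rw [hdext 0 (by omega), show (⟨0, by omega⟩ : Fin g) = 0 from Fin.ext (by simp), hσ0]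
  have hdext1 : TreeDegSeq.dext g d' 1 = d B := by
    rw [hdext 1 h1g]
    rw [show (⟨1, h1g⟩ : Fin g) = 1 from Fin.ext (by rw [hone]), hσ1]
  -- the prefix-sum condition
  have hT : ∀ i : ℕ, 1 ≤ i → i < g →
      2 * i ≤ 1 + ∑ k ∈ Finset.range i, TreeDegSeq.dext g d' k := by
    intro i h1 h2
    rcases Nat.lt_or_ge i 2 with hi2 | hi2
    · have : i = 1 := by omega
      subst this
      rw [Finset.sum_range_one, hdext0]
      omega
    · -- i ≥ 2 : split the sum
      have hsplit : ∑ k ∈ Finset.range i, TreeDegSeq.dext g d' k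
          = d A + d B + ∑ k ∈ Finset.Ico 2 i, TreeDegSeq.dext g d' k := by
        rw [Finset.range_eq_Ico, ← Finset.sum_Ico_consecutive _ (by omega : 0 ≤ 2) (by omega : 2 ≤ i)]
        congr 1
        rw [show Finset.Ico 0 2 = Finset.range 2 from by rw [Finset.range_eq_Ico]]
        rw [Finset.sum_range_succ, Finset.sum_range_one, hdext0, hdext1]
      rcases Nat.lt_or_ge i 3 with hi3 | hi3
      · have : i = 2 := by omega
        subst this
        rw [hsplit]
        simp only [Finset.Ico_self, Finset.sum_empty]
        have := hd B
        omega
      · -- i ≥ 3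
        have him1 : i - 1 < g := by omega
        set t := d (σ ⟨i - 1, him1⟩) with ht
        rcases Nat.lt_or_ge t 2 with ht1 | ht2
        · -- t = 1 : all later positions have degree 1
          have htail : ∑ k ∈ Finset.Ico i g, TreeDegSeq.dext g d' k = g - i := by
            have : ∀ k ∈ Finset.Ico i g, TreeDegSeq.dext g d' k = 1 := by
              intro k hk
              rw [Finset.mem_Ico] at hk
              rw [hdext k hk.2]
              have hle := hdesc ⟨i - 1, him1⟩ ⟨k, hk.2⟩ (by simpa using by omega) (by simpa using by omega)
              have hge := hd (σ ⟨k, hk.2⟩)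
              omega
            rw [Finset.sum_congr rfl this]
            simp [Nat.card_Ico]
          have htot : ∑ k ∈ Finset.range g, TreeDegSeq.dext g d' k = 2 * g - 2 := by
            rw [TreeDegSeq.sum_dext, hsum']
          have hsplit2 : ∑ k ∈ Finset.range g, TreeDegSeq.dext g d' k
              = ∑ k ∈ Finset.range i, TreeDegSeq.dext g d' k
                + ∑ k ∈ Finset.Ico i g, TreeDegSeq.dext g d' k := by
            simp only [Finset.range_eq_Ico]
            rw [← Finset.sum_Ico_consecutive _ (by omega : (0:ℕ) ≤ i) (by omega : i ≤ g)]
          omega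
        · -- t ≥ 2 : all positions in [2, i) have degree ≥ 2
          have hmid : 2 * (i - 2) ≤ ∑ k ∈ Finset.Ico 2 i, TreeDegSeq.dext g d' k := by
            have h2le : ∀ k ∈ Finset.Ico 2 i, 2 ≤ TreeDegSeq.dext g d' k := by
              intro k hk
              rw [Finset.mem_Ico] at hk
              have hkg : k < g := by omega
              rw [hdext k hkg]
              have hle := hdesc ⟨k, hkg⟩ ⟨i - 1, him1⟩ (by simpa using hk.1) (by simpa using by omega)
              omega
            calc 2 * (i - 2) = ∑ _k ∈ Finset.Ico 2 i, 2 := by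
                  rw [Finset.sum_const, Nat.card_Ico]; ring
              _ ≤ _ := Finset.sum_le_sum h2le
          have hB1 := hd B
          rw [hsplit]
          omega
  -- apply the core construction
  have hpre : ∀ i : ℕ, 1 ≤ i → i < g → i ≤ TreeDegSeq.S (TreeDegSeq.cfun g d') i := by
    intro i h1 h2
    have heq := TreeDegSeq.S_cfun_add g d' hd' i (by omega)
    have := hT i h1 h2
    omega
  obtain ⟨G, hGtree, hGdeg, hG01⟩ := TreeDegSeq.core g hg d' hd' hsum' hpre
  -- transfer along the permutation
  set T : SimpleGraph (Fin g) := SimpleGraph.comap (σ.symm : Fin g → Fin g) G with hTdef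
  have hTadj : ∀ x y, T.Adj x y ↔ G.Adj (σ.symm x) (σ.symm y) := fun _ _ => Iff.rfl
  have hsymmA : σ.symm A = 0 := by rw [← hσ0, Equiv.symm_apply_apply]
  have hsymmB : σ.symm B = 1 := by rw [← hσ1, Equiv.symm_apply_apply]
  set φ : T ≃g G := SimpleGraph.Iso.comap σ.symm G with hφdef
  have hφs : ∀ x, φ.symm x = σ x := fun x => by
    rw [hφdef, SimpleGraph.Iso.comap_symm_apply]
    simp
  refine ⟨T, ⟨?_, ?_⟩, ?_, ?_⟩
  · -- connected
    rw [SimpleGraph.connected_iff]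
    constructor
    · intro x y
      have hR : G.Reachable (σ.symm x) (σ.symm y) := hGtree.isConnected.preconnected _ _
      have hR2 := hR.map φ.symm.toHom
      have e1 : φ.symm.toHom (σ.symm x) = x := by
        show φ.symm (σ.symm x) = x
        rw [hφs, Equiv.apply_symm_apply]
      have e2 : φ.symm.toHom (σ.symm y) = y := by
        show φ.symm (σ.symm y) = y
        rw [hφs, Equiv.apply_symm_apply]
      rwa [e1, e2] at hR2
    · exact ⟨0⟩
  · -- acyclic
    intro v w hw
    have hinj : Function.Injective (φ.toHom : Fin g → Fin g) :=
      fun a b hab => φ.toEquiv.injective hab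
    exact hGtree.IsAcyclic (w.map φ.toHom) (hw.map hinj)
  · -- degrees
    intro x
    have h1 := hGdeg (σ.symm x)
    have h2 : d' (σ.symm x) = d x := by
      rw [hd'def]
      simp
    rw [← h2, ← h1]
    exact Nat.card_congr (Equiv.subtypeEquiv σ.symm (fun j => Iff.rfl))
  · -- adjacency
    have hTAB : T.Adj A B := by
      rw [hTadj, hsymmA, hsymmB]
      exact hG01
    rcases hAB with ⟨rfl, rfl⟩ | ⟨rfl, rfl⟩
    · exact hTAB
    · exact hTAB.symm
end

section
/- Let T be a tree on g ≥ 4 vertices that is not a path, and suppose T has at least two leaves u, v. Then there exists a tree T' on the same vertex set with the same degree sequence as T (each vertex has the same degree in T' as in T) in which u and v are adjacent to a common vertex. -/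
open SimpleGraph

namespace LTCN

variable {V : Type*}

lemma sym2_ne {p q r s : V} (h1 : p ≠ r) (h2 : p ≠ s) : s(p,q) ≠ s(r,s) := by
  intro h
  rcases Sym2.eq_iff.mp h with ⟨h', -⟩ | ⟨h', -⟩
  · exact h1 h'
  · exact h2 h'

lemma reach_mono {G H : SimpleGraph V} (h : ∀ x y, G.Adj x y → H.Reachable x y) :
    ∀ {x y : V}, G.Reachable x y → H.Reachable x y := by
  intro x y hr
  obtain ⟨W⟩ := hr
  induction W with
  | nil => exact Reachable.refl _
  | cons ha q ih => exact (h _ _ ha).trans ih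

lemma walk_closed {G : SimpleGraph V} {S : Set V}
    (hS : ∀ x y, x ∈ S → G.Adj x y → y ∈ S) :
    ∀ {x y : V}, G.Walk x y → x ∈ S → y ∈ S := by
  intro x y W
  induction W with
  | nil => exact id
  | cons ha q ih => exact fun hx => ih (hS _ _ hx ha)

lemma crossing {G : SimpleGraph V} {S : Set V} {x y : V} (W : G.Walk x y)
    (hx : x ∈ S) (hy : y ∉ S) : ∃ z w, z ∈ S ∧ w ∉ S ∧ G.Adj z w := by
  by_contra hc
  push_neg at hc
  exact hy (walk_closed (fun p q hp hpq => by
    by_contra hq; exact hc p q hp hq hpq) W hx)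

lemma getVert_inj {G : SimpleGraph V} :
    ∀ {x y : V} (p : G.Walk x y), p.IsPath → ∀ i j, i ≤ p.length → j ≤ p.length →
      p.getVert i = p.getVert j → i = j := by
  intro x y p
  induction p with
  | nil => intro _ i j hi hj _; simp only [Walk.length_nil, Nat.le_zero] at hi hj; omega
  | cons ha q ih =>
    intro hp i j hi hj hij
    rw [Walk.cons_isPath_iff] at hp
    rw [Walk.length_cons] at hi hj
    match i, j with
    | 0, 0 => rfl
    | 0, j+1 =>
      exfalso
      rw [Walk.getVert_zero, Walk.getVert_cons_succ] at hij
      exact hp.2 (Walk.mem_support_iff_exists_getVert.mpr ⟨j, hij.symm, by omega⟩)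
    | i+1, 0 =>
      exfalso
      rw [Walk.getVert_zero, Walk.getVert_cons_succ] at hij
      exact hp.2 (Walk.mem_support_iff_exists_getVert.mpr ⟨i, hij, by omega⟩)
    | i+1, j+1 =>
      rw [Walk.getVert_cons_succ, Walk.getVert_cons_succ] at hij
      have := ih hp.1 i j (by omega) (by omega) hij
      omega

lemma subwalk {G : SimpleGraph V} {x y : V} (p : G.Walk x y) (i : ℕ) :
    ∀ j, i ≤ j → j ≤ p.length →
      ∃ W : G.Walk (p.getVert i) (p.getVert j), W.length = j - i ∧
        ∀ z ∈ W.support, ∃ m, i ≤ m ∧ m ≤ j ∧ p.getVert m = z := by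
  intro j hij
  induction j, hij using Nat.le_induction with
  | base =>
    intro _
    refine ⟨Walk.nil, by simp, ?_⟩
    intro z hz
    rw [Walk.support_nil, List.mem_singleton] at hz
    exact ⟨i, le_rfl, le_rfl, hz.symm⟩
  | succ j hij ih =>
    intro hjl
    obtain ⟨W, hlen, hsup⟩ := ih (by omega)
    refine ⟨W.concat (p.adj_getVert_succ (by omega)), ?_, ?_⟩
    · rw [Walk.length_concat, hlen]; omega
    · intro z hz
      rw [Walk.support_concat] at hz
      rw [List.mem_append, List.mem_singleton] at hz
      rcases hz with hz | hz
      · obtain ⟨m, h1, h2, h3⟩ := hsup z hz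
        exact ⟨m, h1, by omega, h3⟩
      · exact ⟨j+1, by omega, le_rfl, hz.symm⟩

lemma path_two_edges_start {G : SimpleGraph V} :
    ∀ {x y : V} (p : G.Walk x y), p.IsPath → ∀ {y1 y2 : V},
      s(x, y1) ∈ p.edges → s(x, y2) ∈ p.edges → y1 = y2 := by
  intro x y p
  induction p with
  | nil => intro _ y1 y2 h1 _; simp at h1
  | @cons xu xv xw ha q ih =>
    intro hp y1 y2 h1 h2
    rw [Walk.cons_isPath_iff] at hp
    rw [Walk.edges_cons, List.mem_cons] at h1 h2
    have key : ∀ {y' : V}, s(xu, y') = s(xu, xv) ∨ s(xu, y') ∈ q.edges → y' = xv := by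
      intro y' h
      rcases h with h | h
      · rcases Sym2.eq_iff.mp h with ⟨-, h'⟩ | ⟨h', -⟩
        · exact h'
        · exact absurd h' ha.ne
      · exact absurd (q.fst_mem_support_of_mem_edges h) hp.2
    exact (key h1).trans (key h2).symm

lemma path_three_edges {G : SimpleGraph V} :
    ∀ {x y : V} (p : G.Walk x y), p.IsPath → ∀ {w y1 y2 y3 : V},
      y1 ≠ y2 → y1 ≠ y3 → y2 ≠ y3 →
      s(w,y1) ∈ p.edges → s(w,y2) ∈ p.edges → s(w,y3) ∈ p.edges → False := by
  intro x y p
  induction p with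
  | nil => intro _ w y1 y2 y3 _ _ _ h1 _ _; simp at h1
  | @cons xu xv xw ha q ih =>
    intro hp w y1 y2 y3 h12 h13 h23 h1 h2 h3
    rw [Walk.cons_isPath_iff] at hp
    rw [Walk.edges_cons, List.mem_cons] at h1 h2 h3
    by_cases hwx : w = xu
    · subst hwx
      have hz : ∀ {y' : V}, s(w, y') = s(w, xv) ∨ s(w, y') ∈ q.edges → y' = xv := by
        intro y' h
        rcases h with h | h
        · rcases Sym2.eq_iff.mp h with ⟨-, h'⟩ | ⟨h', -⟩
          · exact h'
          · exact absurd h' ha.ne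
        · exact absurd (q.fst_mem_support_of_mem_edges h) hp.2
      exact h12 ((hz h1).trans (hz h2).symm)
    · have key : ∀ {y' : V}, s(w, y') = s(xu, xv) → w = xv ∧ y' = xu := by
        intro y' h
        rcases Sym2.eq_iff.mp h with ⟨h', -⟩ | ⟨h', h''⟩
        · exact absurd h' hwx
        · exact ⟨h', h''⟩
      rcases h1 with h1 | h1
      · obtain ⟨hw, hy⟩ := key h1
        subst hw; subst hy
        rcases h2 with h2 | h2
        · exact h12 ((key h1).2.trans (key h2).2.symm)
        · rcases h3 with h3 | h3
          · exact h13 ((key h1).2.trans (key h3).2.symm)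
          · exact h23 (path_two_edges_start q hp.1 h2 h3)
      · rcases h2 with h2 | h2
        · obtain ⟨hw, hy⟩ := key h2
          subst hw; subst hy
          rcases h3 with h3 | h3
          · exact h23 ((key h2).2.trans (key h3).2.symm)
          · exact h13 (path_two_edges_start q hp.1 h1 h3)
        · rcases h3 with h3 | h3
          · obtain ⟨hw, hy⟩ := key h3
            subst hw; subst hy
            exact h12 (path_two_edges_start q hp.1 h1 h2)
          · exact ih hp.1 h12 h13 h23 h1 h2 h3



lemma tree_ncard [Fintype V] {T : SimpleGraph V} (hT : T.IsTree) :
    T.edgeSet.ncard + 1 = Fintype.card V := by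
  classical
  letI : Fintype ↥T.edgeSet := Fintype.ofFinite _
  rw [← coe_edgeFinset, Set.ncard_coe_finset]
  exact hT.card_edgeFinset

lemma card_bound [Fintype V] {G : SimpleGraph V} (hc : G.Connected) :
    Fintype.card V ≤ G.edgeSet.ncard + 1 := by
  classical
  obtain ⟨root⟩ := hc.nonempty
  have H : ∀ w : V, w ≠ root → ∃ e ∈ G.edgeSet, ∃ w',
      e = s(w, w') ∧ G.dist w' root < G.dist w root := by
    intro w hw
    obtain ⟨p, hp, hlen⟩ := (hc.preconnected w root).exists_path_of_dist
    have hpos : 0 < p.length := by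
      rcases Nat.eq_zero_or_pos p.length with h0 | h
      · exact absurd (Walk.eq_of_length_eq_zero h0) hw
      · exact h
    have hadj : G.Adj w (p.getVert 1) := by
      have := p.adj_getVert_succ hpos
      rwa [Walk.getVert_zero] at this
    refine ⟨s(w, p.getVert 1), G.mem_edgeSet.mpr hadj, p.getVert 1, rfl, ?_⟩
    have hnil : ¬ p.Nil := by rw [Walk.nil_iff_length_eq]; omega
    have h1 : G.dist (p.getVert 1) root ≤ p.tail.length := dist_le p.tail
    have h2 : p.tail.length + 1 = p.length := Walk.length_tail_add_one hnil
    omega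
  choose e he w' hw' hd using H
  let f : V → ↥G.edgeSet ⊕ Unit := fun w =>
    if h : w = root then Sum.inr () else Sum.inl ⟨e w h, he w h⟩
  have hf : Function.Injective f := by
    intro w1 w2 h
    by_cases h1 : w1 = root <;> by_cases h2 : w2 = root
    · rw [h1, h2]
    · simp only [f, dif_pos h1, dif_neg h2] at h; exact absurd h (by simp)
    · simp only [f, dif_neg h1, dif_pos h2] at h; exact absurd h (by simp)
    · simp only [f, dif_neg h1, dif_neg h2, Sum.inl.injEq, Subtype.mk.injEq] at h
      by_contra hne
      rw [hw' w1 h1, hw' w2 h2, Sym2.eq_iff] at h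
      rcases h with ⟨h', -⟩ | ⟨ha, hb⟩
      · exact hne h'
      · have d1 := hd w1 h1
        have d2 := hd w2 h2
        rw [hb] at d1
        rw [← ha] at d2
        omega
  calc Fintype.card V = Nat.card V := (Nat.card_eq_fintype_card).symm
    _ ≤ Nat.card (↥G.edgeSet ⊕ Unit) := Nat.card_le_card_of_injective f hf
    _ = G.edgeSet.ncard + 1 := by
        rw [Nat.card_sum, Nat.card_coe_set_eq, Nat.card_unique]

lemma isTree_of_connected_card [Fintype V] {G : SimpleGraph V} (hc : G.Connected)
    (hcard : G.edgeSet.ncard + 1 = Fintype.card V) : G.IsTree := by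
  classical
  refine ⟨hc, ?_⟩
  by_contra hcyc
  rw [isAcyclic_iff_forall_adj_isBridge] at hcyc
  push_neg at hcyc
  obtain ⟨x, y, hxy, hbr⟩ := hcyc
  have hreach : (G \ fromEdgeSet {s(x,y)}).Reachable x y := by
    by_contra h
    exact hbr (isBridge_iff.mpr h)
  set G' := G \ fromEdgeSet {s(x,y)} with hG'
  have hc' : G'.Connected := by
    haveI := hc.nonempty
    refine Connected.mk (fun a b => reach_mono ?_ (hc.preconnected a b))
    intro p q hpq
    by_cases hne : s(p,q) = s(x,y)
    · rcases Sym2.eq_iff.mp hne with ⟨rfl, rfl⟩ | ⟨rfl, rfl⟩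
      · exact hreach
      · exact hreach.symm
    · refine Adj.reachable ?_
      rw [sdiff_adj]
      exact ⟨hpq, fun hF => hne ((fromEdgeSet_adj _).mp hF).1⟩
  have hb := card_bound hc'
  have hE : G'.edgeSet = G.edgeSet \ {s(x,y)} := by
    rw [hG', edgeSet_sdiff, edgeSet_fromEdgeSet]
    ext e
    simp only [Set.mem_diff, Set.mem_singleton_iff, Set.mem_setOf_eq, not_and, not_not]
    constructor
    · rintro ⟨heG, h⟩
      refine ⟨heG, fun hexy => ?_⟩
      subst hexy
      exact hxy.ne (Sym2.mk_isDiag_iff.mp (h rfl))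
    · rintro ⟨heG, h⟩
      exact ⟨heG, fun hexy => absurd hexy h⟩
  have hcnt : G'.edgeSet.ncard + 1 = G.edgeSet.ncard := by
    rw [hE]
    exact Set.ncard_diff_singleton_add_one (G.mem_edgeSet.mpr hxy) (Set.toFinite _)
  omega


lemma ncard_key {α : Type*} [Finite α] (S : Set α) (q r : α) (hq : q ∈ S) (hr : r ∉ S) :
    (insert r (S \ {q})).ncard = S.ncard := by
  have h1 : r ∉ S \ {q} := fun h => hr h.1
  rw [Set.ncard_insert_of_notMem h1 (Set.toFinite _)]
  exact Set.ncard_diff_singleton_add_one hq (Set.toFinite _)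

lemma swap [Fintype V] {T : SimpleGraph V} (hT : T.IsTree) {a b c d : V}
    (hab : T.Adj a b) (hcd : T.Adj c d) (hbc : b ≠ c) (had : a ≠ d)
    (W : T.Walk b c) (haW : a ∉ W.support) (hdW : d ∉ W.support) :
    ∃ T' : SimpleGraph V, T'.IsTree ∧
      (∀ x, Nat.card {y : V | T'.Adj x y} = Nat.card {y : V | T.Adj x y}) ∧
      T'.Adj a c ∧ T'.Adj b d ∧
      (∀ x y, T.Adj x y → s(x,y) ≠ s(a,b) → s(x,y) ≠ s(c,d) → T'.Adj x y) := by
  classical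
  have hac : a ≠ c := fun h => haW (h ▸ W.end_mem_support)
  have hbd : b ≠ d := fun h => hdW (h ▸ W.start_mem_support)
  have hanb : a ≠ b := hab.ne
  have hcnd : c ≠ d := hcd.ne
  have hWab : s(a,b) ∉ W.edges := fun h => haW (W.fst_mem_support_of_mem_edges h)
  have hWcd : s(c,d) ∉ W.edges := fun h => hdW (W.snd_mem_support_of_mem_edges h)
  have hbr := isAcyclic_iff_forall_adj_isBridge.mp hT.IsAcyclic
  -- non-adjacency of a,c and b,d
  have hmem : ∀ (E : Sym2 V) (e : Sym2 V), e ∈ T.edgeSet → e ≠ E →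
      e ∈ (T \ fromEdgeSet {E}).edgeSet := by
    intro E e he hne
    induction e using Sym2.ind with
    | _ p q =>
      rw [mem_edgeSet] at he ⊢
      rw [sdiff_adj]
      exact ⟨he, fun hF => hne ((fromEdgeSet_adj _).mp hF).1⟩
  have hnac : ¬ T.Adj a c := by
    intro h
    refine isBridge_iff.mp (hbr hab) ?_
    have hWr : ∀ e ∈ W.reverse.edges, e ∈ (T \ fromEdgeSet {s(a,b)}).edgeSet := by
      intro e he
      rw [Walk.edges_reverse, List.mem_reverse] at he
      exact hmem _ e (W.edges_subset_edgeSet he) (fun hh => hWab (hh ▸ he))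
    have hadjac : (T \ fromEdgeSet {s(a,b)}).Adj a c := by
      rw [sdiff_adj]
      refine ⟨h, fun hF => ?_⟩
      have := ((fromEdgeSet_adj _).mp hF).1
      rw [Set.mem_singleton_iff] at this
      exact hbc (Sym2.congr_right.mp this).symm
    exact ⟨Walk.cons hadjac (W.reverse.transfer _ hWr)⟩
  have hnbd : ¬ T.Adj b d := by
    intro h
    refine isBridge_iff.mp (hbr hcd) ?_
    have hWr : ∀ e ∈ W.reverse.edges, e ∈ (T \ fromEdgeSet {s(c,d)}).edgeSet := by
      intro e he
      rw [Walk.edges_reverse, List.mem_reverse] at he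
      exact hmem _ e (W.edges_subset_edgeSet he) (fun hh => hWcd (hh ▸ he))
    have hadjbd : (T \ fromEdgeSet {s(c,d)}).Adj b d := by
      rw [sdiff_adj]
      refine ⟨h, fun hF => ?_⟩
      have := ((fromEdgeSet_adj _).mp hF).1
      rw [Set.mem_singleton_iff] at this
      exact (sym2_ne hbc hbd) this
    exact ⟨(W.reverse.transfer _ hWr).concat hadjbd⟩
  -- the new graph
  set T' := T.deleteEdges {s(a,b), s(c,d)} ⊔ fromEdgeSet {s(a,c), s(b,d)} with hT'def
  have hadj : ∀ x y : V, T'.Adj x y ↔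
      (T.Adj x y ∧ s(x,y) ≠ s(a,b) ∧ s(x,y) ≠ s(c,d)) ∨
      (s(x,y) = s(a,c) ∨ s(x,y) = s(b,d)) := by
    intro x y
    rw [hT'def, sup_adj, deleteEdges_adj, fromEdgeSet_adj]
    constructor
    · rintro (⟨h, hn⟩ | ⟨h, -⟩)
      · refine Or.inl ⟨h, ?_, ?_⟩ <;> simp only [Set.mem_insert_iff, Set.mem_singleton_iff,
          not_or] at hn
        · exact hn.1
        · exact hn.2
      · exact Or.inr (by simpa using h)
    · rintro (⟨h, h1, h2⟩ | h)
      · exact Or.inl ⟨h, by simp [h1, h2]⟩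
      · refine Or.inr ⟨by simpa using h, ?_⟩
        rcases h with h | h
        · intro hE; subst hE
          rcases Sym2.eq_iff.mp h with ⟨rfl, rfl⟩ | ⟨h1, h2⟩
          · exact hac rfl
          · exact hac (h2.symm.trans h1)
        · intro hE; subst hE
          rcases Sym2.eq_iff.mp h with ⟨rfl, rfl⟩ | ⟨h1, h2⟩
          · exact hbd rfl
          · exact hbd (h2.symm.trans h1)
  have hkeep : ∀ x y, T.Adj x y → s(x,y) ≠ s(a,b) → s(x,y) ≠ s(c,d) → T'.Adj x y :=
    fun x y h h1 h2 => (hadj x y).mpr (Or.inl ⟨h, h1, h2⟩)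
  have hT'ac : T'.Adj a c := (hadj a c).mpr (Or.inr (Or.inl rfl))
  have hT'bd : T'.Adj b d := (hadj b d).mpr (Or.inr (Or.inr rfl))
  -- reachability of b and c in T'
  have hWT' : ∀ e ∈ W.edges, e ∈ T'.edgeSet := by
    intro e he
    have h1 : e ≠ s(a,b) := fun h => hWab (h ▸ he)
    have h2 : e ≠ s(c,d) := fun h => hWcd (h ▸ he)
    have heT := W.edges_subset_edgeSet he
    induction e using Sym2.ind with
    | _ p q =>
      rw [mem_edgeSet] at heT ⊢
      exact hkeep p q heT h1 h2
  have hreach_bc : T'.Reachable b c := ⟨W.transfer T' hWT'⟩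
  -- connectivity
  have hedge_reach : ∀ x y, T.Adj x y → T'.Reachable x y := by
    intro x y h
    by_cases h1 : s(x,y) = s(a,b)
    · rcases Sym2.eq_iff.mp h1 with ⟨rfl, rfl⟩ | ⟨rfl, rfl⟩
      · exact hT'ac.reachable.trans hreach_bc.symm
      · exact hreach_bc.trans hT'ac.symm.reachable
    · by_cases h2 : s(x,y) = s(c,d)
      · rcases Sym2.eq_iff.mp h2 with ⟨rfl, rfl⟩ | ⟨rfl, rfl⟩
        · exact hreach_bc.symm.trans hT'bd.reachable
        · exact hT'bd.symm.reachable.trans hreach_bc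
      · exact (hkeep x y h h1 h2).reachable
  haveI := hT.isConnected.nonempty
  have hconn' : T'.Connected :=
    Connected.mk (fun x y => reach_mono hedge_reach (hT.isConnected.preconnected x y))
  -- edge count
  have hE : T'.edgeSet = (T.edgeSet \ {s(a,b), s(c,d)}) ∪ {s(a,c), s(b,d)} := by
    rw [hT'def, edgeSet_sup, edgeSet_deleteEdges, edgeSet_fromEdgeSet]
    congr 1
    ext e
    simp only [Set.mem_diff, Set.mem_insert_iff, Set.mem_singleton_iff, Set.mem_setOf_eq]
    constructor
    · rintro ⟨h, -⟩; exact h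
    · rintro (rfl | rfl)
      · exact ⟨Or.inl rfl, by simp [Sym2.mk_isDiag_iff, hac]⟩
      · exact ⟨Or.inr rfl, by simp [Sym2.mk_isDiag_iff, hbd]⟩
  have habcd : s(a,b) ≠ s(c,d) := sym2_ne hac had
  have hacbd : s(a,c) ≠ s(b,d) := sym2_ne hanb had
  have hcard : T'.edgeSet.ncard = T.edgeSet.ncard := by
    rw [hE]
    have hs₁sub : ({s(a,b), s(c,d)} : Set (Sym2 V)) ⊆ T.edgeSet := by
      rintro e (rfl | rfl)
      · exact T.mem_edgeSet.mpr hab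
      · exact T.mem_edgeSet.mpr hcd
    have hd1 : s(a,c) ∉ T.edgeSet := fun h => hnac (T.mem_edgeSet.mp h)
    have hd2 : s(b,d) ∉ T.edgeSet := fun h => hnbd (T.mem_edgeSet.mp h)
    have hdisj : Disjoint (T.edgeSet \ {s(a,b), s(c,d)}) ({s(a,c), s(b,d)} : Set (Sym2 V)) := by
      rw [Set.disjoint_right]
      rintro e (rfl | rfl) he
      · exact hd1 he.1
      · exact hd2 he.1
    rw [Set.ncard_union_eq hdisj (Set.toFinite _) (Set.toFinite _),
      Set.ncard_diff hs₁sub (Set.toFinite _), Set.ncard_pair habcd, Set.ncard_pair hacbd]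
    have h2le : 2 ≤ T.edgeSet.ncard := by
      have := Set.ncard_le_ncard hs₁sub (Set.toFinite _)
      rwa [Set.ncard_pair habcd] at this
    omega
  have htree' : T'.IsTree := isTree_of_connected_card hconn'
    (by rw [hcard]; exact tree_ncard hT)
  -- degrees
  have hdeg : ∀ x, Nat.card {y : V | T'.Adj x y} = Nat.card {y : V | T.Adj x y} := by
    intro x
    rw [Nat.card_coe_set_eq, Nat.card_coe_set_eq]
    by_cases hxa : x = a
    · subst hxa
      have hset : {y | T'.Adj x y} = insert c ({y | T.Adj x y} \ {b}) := by
        ext y'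
        simp only [Set.mem_setOf_eq, Set.mem_insert_iff, Set.mem_diff, Set.mem_singleton_iff,
          hadj]
        constructor
        · rintro (⟨h, h1, -⟩ | (h | h))
          · exact Or.inr ⟨h, fun hyb => h1 (by rw [hyb])⟩
          · exact Or.inl (Sym2.congr_right.mp h)
          · exact absurd h (sym2_ne hanb had)
        · rintro (rfl | ⟨h, hyb⟩)
          · exact Or.inr (Or.inl rfl)
          · exact Or.inl ⟨h, fun he => hyb (Sym2.congr_right.mp he), sym2_ne hac had⟩
      rw [hset]
      exact ncard_key _ b c hab hnac
    by_cases hxb : x = b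
    · subst hxb
      have hset : {y | T'.Adj x y} = insert d ({y | T.Adj x y} \ {a}) := by
        ext y'
        simp only [Set.mem_setOf_eq, Set.mem_insert_iff, Set.mem_diff, Set.mem_singleton_iff,
          hadj]
        constructor
        · rintro (⟨h, h1, -⟩ | (h | h))
          · refine Or.inr ⟨h, fun hyb => h1 ?_⟩
            rw [hyb, Sym2.eq_swap]
          · exact absurd h (sym2_ne hanb.symm hbc)
          · exact Or.inl (Sym2.congr_right.mp h)
        · rintro (rfl | ⟨h, hyb⟩)
          · exact Or.inr (Or.inr rfl)
          · refine Or.inl ⟨h, ?_, sym2_ne hbc hbd⟩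
            intro he
            rcases Sym2.eq_iff.mp he with ⟨h1, -⟩ | ⟨-, h2⟩
            · exact hanb h1.symm
            · exact hyb h2
      rw [hset]
      exact ncard_key _ a d hab.symm (fun h => hnbd h)
    by_cases hxc : x = c
    · subst hxc
      have hset : {y | T'.Adj x y} = insert a ({y | T.Adj x y} \ {d}) := by
        ext y'
        simp only [Set.mem_setOf_eq, Set.mem_insert_iff, Set.mem_diff, Set.mem_singleton_iff,
          hadj]
        constructor
        · rintro (⟨h, -, h2⟩ | (h | h))
          · exact Or.inr ⟨h, fun hyd => h2 (by rw [hyd])⟩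
          · rcases Sym2.eq_iff.mp h with ⟨h1, -⟩ | ⟨-, h2⟩
            · exact absurd h1.symm hac
            · exact Or.inl h2
          · exact absurd h (sym2_ne hbc.symm hcnd)
        · rintro (rfl | ⟨h, hyd⟩)
          · refine Or.inr (Or.inl ?_); rw [Sym2.eq_swap]
          · exact Or.inl ⟨h, sym2_ne (fun hh => hac hh.symm) hbc.symm,
              fun he => hyd (Sym2.congr_right.mp he)⟩
      rw [hset]
      exact ncard_key _ d a hcd (fun h => hnac h.symm)
    by_cases hxd : x = d
    · subst hxd
      have hset : {y | T'.Adj x y} = insert b ({y | T.Adj x y} \ {c}) := by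
        ext y'
        simp only [Set.mem_setOf_eq, Set.mem_insert_iff, Set.mem_diff, Set.mem_singleton_iff,
          hadj]
        constructor
        · rintro (⟨h, -, h2⟩ | (h | h))
          · refine Or.inr ⟨h, fun hyc => h2 ?_⟩
            rw [hyc, Sym2.eq_swap]
          · exact absurd h (sym2_ne had.symm hcnd.symm)
          · rcases Sym2.eq_iff.mp h with ⟨h1, -⟩ | ⟨-, h2⟩
            · exact absurd h1.symm hbd
            · exact Or.inl h2
        · rintro (rfl | ⟨h, hyc⟩)
          · refine Or.inr (Or.inr ?_); rw [Sym2.eq_swap]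
          · refine Or.inl ⟨h, sym2_ne had.symm hbd.symm, ?_⟩
            intro he
            rcases Sym2.eq_iff.mp he with ⟨h1, -⟩ | ⟨-, h2⟩
            · exact hcnd h1.symm
            · exact hyc h2
      rw [hset]
      exact ncard_key _ c b hcd.symm (fun h => hnbd h.symm)
    · have hset : {y | T'.Adj x y} = {y | T.Adj x y} := by
        ext y'
        simp only [Set.mem_setOf_eq, hadj]
        constructor
        · rintro (⟨h, -, -⟩ | (h | h))
          · exact h
          · exact absurd h (sym2_ne hxa hxc)
          · exact absurd h (sym2_ne hxb hxd)
        · intro h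
          exact Or.inl ⟨h, sym2_ne hxa hxb, sym2_ne hxc hxd⟩
      rw [hset]
  exact ⟨T', htree', hdeg, hT'ac, hT'bd, hkeep⟩


lemma aux [Fintype V] (u v : V) :
    ∀ n (T : SimpleGraph V), T.IsTree → 4 ≤ Fintype.card V →
      (∃ w, 3 ≤ Nat.card {x : V | T.Adj w x}) → u ≠ v →
      Nat.card {x : V | T.Adj u x} = 1 → Nat.card {x : V | T.Adj v x} = 1 →
      T.dist u v ≤ n →
      ∃ T' : SimpleGraph V, T'.IsTree ∧
        (∀ x, Nat.card {y : V | T'.Adj x y} = Nat.card {y : V | T.Adj x y}) ∧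
        ∃ w, T'.Adj w u ∧ T'.Adj w v := by
  intro n
  induction n with
  | zero =>
    intro T hT hg hnp huv hu hv hd
    exact absurd ((hT.isConnected.preconnected u v).dist_eq_zero_iff.mp
      (Nat.le_zero.mp hd)) huv
  | succ n ih =>
    intro T hT hg hnp huv hu hv hd
    classical
    have hconn := hT.isConnected
    have hreach := hconn.preconnected u v
    obtain ⟨u₁, hu₁⟩ := Set.ncard_eq_one.mp
      (by rw [← Nat.card_coe_set_eq]; exact hu)
    obtain ⟨v₁, hv₁⟩ := Set.ncard_eq_one.mp
      (by rw [← Nat.card_coe_set_eq]; exact hv)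
    have hk0 : T.dist u v ≠ 0 := fun h => huv (hreach.dist_eq_zero_iff.mp h)
    have hk1 : T.dist u v ≠ 1 := by
      intro h
      have hadjuv : T.Adj u v := dist_eq_one_iff_adj.mp h
      have hclosed : ∀ x y : V, x ∈ ({u, v} : Set V) → T.Adj x y →
          y ∈ ({u, v} : Set V) := by
        rintro x y (hx | hx) hxy
        · rw [hx] at hxy
          have h1 : y ∈ {x | T.Adj u x} := hxy
          have h2 : v ∈ {x | T.Adj u x} := hadjuv
          rw [hu₁, Set.mem_singleton_iff] at h1 h2
          right; rw [h1, ← h2]; exact rfl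
        · rw [hx] at hxy
          have h1 : y ∈ {x | T.Adj v x} := hxy
          have h2 : u ∈ {x | T.Adj v x} := hadjuv.symm
          rw [hv₁, Set.mem_singleton_iff] at h1 h2
          left; rw [h1, ← h2]
      have hall : ∀ x : V, x ∈ ({u, v} : Set V) :=
        fun x => walk_closed hclosed (hconn.preconnected u x).some (by left; rfl)
      have hcV : Fintype.card V ≤ 2 := by
        have huniv : (Set.univ : Set V) = ({u, v} : Set V) :=
          (Set.eq_univ_of_forall hall).symm
        have h2 : ({u, v} : Set V).ncard = 2 := Set.ncard_pair huv
        rw [← Nat.card_eq_fintype_card, ← Set.ncard_univ, huniv, h2]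
      omega
    have hk2 : 2 ≤ T.dist u v := by omega
    obtain ⟨p, hpath, hplen⟩ := hconn.exists_path_of_dist u v
    have hL2 : 2 ≤ p.length := by omega
    -- basic adjacency facts along p
    have hadj01 : T.Adj u (p.getVert 1) := by
      have := p.adj_getVert_succ (show 0 < p.length by omega)
      rwa [Walk.getVert_zero] at this
    have hadjpen : T.Adj (p.getVert (p.length - 1)) v := by
      have := p.adj_getVert_succ (show p.length - 1 < p.length by omega)
      rw [show p.length - 1 + 1 = p.length by omega] at this
      rwa [Walk.getVert_length] at this
    have hu₁' : u₁ = p.getVert 1 := by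
      have : p.getVert 1 ∈ {x | T.Adj u x} := hadj01
      rw [hu₁, Set.mem_singleton_iff] at this
      exact this.symm
    have hv₁' : v₁ = p.getVert (p.length - 1) := by
      have : p.getVert (p.length - 1) ∈ {x | T.Adj v x} := hadjpen.symm
      rw [hv₁, Set.mem_singleton_iff] at this
      exact this.symm
    by_cases hkk : p.length = 2
    · -- distance two: common neighbor already
      have h12 : T.Adj (p.getVert 1) v := by
        have := hadjpen
        rwa [show p.length - 1 = 1 by omega] at this
      exact ⟨T, hT, fun x => rfl, p.getVert 1, hadj01.symm, h12⟩
    · have hL3 : 3 ≤ p.length := by omega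
      -- there is a vertex off the path
      have hSex : ∃ t, t ∉ p.support := by
        by_contra hallS
        push_neg at hallS
        have hnd := hpath.support_nodup
        have hVcard : Fintype.card V = p.length + 1 := by
          have huniv : p.support.toFinset = Finset.univ :=
            Finset.eq_univ_iff_forall.mpr (fun x => List.mem_toFinset.mpr (hallS x))
          rw [← Finset.card_univ, ← huniv, List.toFinset_card_of_nodup hnd,
            Walk.length_support]
        have hTE := tree_ncard hT
        have hedges : ∀ e ∈ T.edgeSet, e ∈ p.edges := by
          have hnde := hpath.isTrail.edges_nodup
          have hsub : p.edges.toFinset ⊆ T.edgeSet.toFinset := by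
            intro e' he'
            exact Set.mem_toFinset.mpr (p.edges_subset_edgeSet (List.mem_toFinset.mp he'))
          have hcards : T.edgeSet.toFinset.card ≤ p.edges.toFinset.card := by
            rw [List.toFinset_card_of_nodup hnde, Walk.length_edges,
              ← Set.ncard_eq_toFinset_card']
            omega
          have heq := Finset.eq_of_subset_of_card_le hsub hcards
          intro e he
          have : e ∈ T.edgeSet.toFinset := Set.mem_toFinset.mpr he
          rw [← heq] at this
          exact List.mem_toFinset.mp this
        obtain ⟨w, hw⟩ := hnp
        have hw' : 2 < {x | T.Adj w x}.ncard := by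
          rw [← Nat.card_coe_set_eq]; omega
        obtain ⟨y1, y2, y3, hy1, hy2, hy3, h12, h13, h23⟩ :=
          (Set.two_lt_ncard_iff (Set.toFinite _)).mp hw'
        exact path_three_edges p hpath h12 h13 h23
          (hedges _ (T.mem_edgeSet.mpr hy1)) (hedges _ (T.mem_edgeSet.mpr hy2))
          (hedges _ (T.mem_edgeSet.mpr hy3))
      obtain ⟨t, ht⟩ := hSex
      obtain ⟨z, y, hzS, hyS, hzy⟩ :=
        crossing (S := {x | x ∈ p.support}) (hconn.preconnected u t).some
          p.start_mem_support ht
      obtain ⟨i, hiz, hik⟩ := Walk.mem_support_iff_exists_getVert.mp hzS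
      have hzu : z ≠ u := by
        rintro rfl
        have : y ∈ {x | T.Adj z x} := hzy
        rw [hu₁, Set.mem_singleton_iff] at this
        apply hyS
        rw [this, hu₁']
        exact Walk.mem_support_iff_exists_getVert.mpr ⟨1, rfl, by omega⟩
      have hzv : z ≠ v := by
        rintro rfl
        have : y ∈ {x | T.Adj z x} := hzy
        rw [hv₁, Set.mem_singleton_iff] at this
        apply hyS
        rw [this, hv₁']
        exact Walk.mem_support_iff_exists_getVert.mpr ⟨p.length - 1, rfl, by omega⟩
      have hi0 : i ≠ 0 := fun h => hzu (by rw [← hiz, h, Walk.getVert_zero])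
      have hiL : i ≠ p.length := fun h => hzv (by rw [← hiz, h, Walk.getVert_length])
      by_cases hipen : i = p.length - 1
      · -- z is the penultimate vertex : one swap finishes
        obtain ⟨W0, hW0len, hW0sup⟩ := subwalk p 1 (p.length - 1) (by omega) (by omega)
        have hzpen : z = p.getVert (p.length - 1) := by rw [← hiz, hipen]
        let W : T.Walk z (p.getVert 1) := (W0.reverse).copy (by rw [hzpen]) rfl
        have hWsup : ∀ x' ∈ W.support, ∃ m, 1 ≤ m ∧ m ≤ p.length - 1 ∧ p.getVert m = x' := by
          intro x' hx'
          rw [Walk.support_copy, Walk.support_reverse, List.mem_reverse] at hx'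
          exact hW0sup x' hx'
        have hbc : z ≠ p.getVert 1 := by
          intro h
          have := getVert_inj p hpath i 1 (by omega) (by omega) (by rw [hiz, h])
          omega
        have haW : y ∉ W.support := by
          intro hy
          obtain ⟨m, -, hm2, hm3⟩ := hWsup y hy
          exact hyS (Walk.mem_support_iff_exists_getVert.mpr ⟨m, hm3, by omega⟩)
        have hdW : u ∉ W.support := by
          intro hy
          obtain ⟨m, hm1, hm2, hm3⟩ := hWsup u hy
          have : p.getVert m = p.getVert 0 := by rw [hm3, Walk.getVert_zero]
          have := getVert_inj p hpath m 0 (by omega) (by omega) this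
          omega
        have hyu : y ≠ u := fun h => hyS (h ▸ p.start_mem_support)
        obtain ⟨T', htree', hdeg', hac', hbd', hkeep'⟩ :=
          swap hT hzy.symm hadj01.symm hbc hyu W haW hdW
        refine ⟨T', htree', hdeg', z, hbd', ?_⟩
        have hTzv : T.Adj z v := by rw [hzpen]; exact hadjpen
        refine hkeep' z v hTzv ?_ ?_
        · intro he
          rcases Sym2.eq_iff.mp he with ⟨h1, -⟩ | ⟨-, h2⟩
          · exact hyS (h1 ▸ hzS)
          · exact hyS (h2 ▸ p.end_mem_support)
        · intro he
          rcases Sym2.eq_iff.mp he with ⟨h1, -⟩ | ⟨h1, -⟩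
          · exact hbc h1
          · exact hzu h1
      · -- 1 ≤ i ≤ p.length - 2 : swap to decrease the distance
        have hile : i ≤ p.length - 2 := by omega
        obtain ⟨W0, hW0len, hW0sup⟩ := subwalk p i (p.length - 1) (by omega) (by omega)
        let W : T.Walk z (p.getVert (p.length - 1)) := W0.copy (by rw [hiz]) rfl
        have hWsup : ∀ x' ∈ W.support, ∃ m, i ≤ m ∧ m ≤ p.length - 1 ∧ p.getVert m = x' := by
          intro x' hx'
          rw [Walk.support_copy] at hx'
          exact hW0sup x' hx'
        have hbc : z ≠ p.getVert (p.length - 1) := by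
          intro h
          have := getVert_inj p hpath i (p.length - 1) (by omega) (by omega) (by rw [hiz, h])
          omega
        have hyv : y ≠ v := fun h => hyS (h ▸ p.end_mem_support)
        have haW : y ∉ W.support := by
          intro hy
          obtain ⟨m, -, hm2, hm3⟩ := hWsup y hy
          exact hyS (Walk.mem_support_iff_exists_getVert.mpr ⟨m, hm3, by omega⟩)
        have hdW : v ∉ W.support := by
          intro hy
          obtain ⟨m, hm1, hm2, hm3⟩ := hWsup v hy
          have : p.getVert m = p.getVert p.length := by rw [hm3, Walk.getVert_length]
          have := getVert_inj p hpath m p.length (by omega) (by omega) this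
          omega
        obtain ⟨T', htree', hdeg', hac', hbd', hkeep'⟩ :=
          swap hT hzy.symm hadjpen hbc hyv W haW hdW
        -- T' walk from u to z of length i
        obtain ⟨W1, hW1len, hW1sup⟩ := subwalk p 0 i (Nat.zero_le _) (by omega)
        let W1' : T.Walk u z := W1.copy (by rw [Walk.getVert_zero]) hiz
        have hW1T' : ∀ e ∈ W1'.edges, e ∈ T'.edgeSet := by
          intro e he
          have heT : e ∈ T.edgeSet := W1'.edges_subset_edgeSet he
          have hsupe : ∀ x' ∈ W1'.support, ∃ m, m ≤ i ∧ p.getVert m = x' := by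
            intro x' hx'
            rw [Walk.support_copy] at hx'
            obtain ⟨m, -, hm2, hm3⟩ := hW1sup x' hx'
            exact ⟨m, hm2, hm3⟩
          have h1 : e ≠ s(y, z) := by
            intro hh
            have : y ∈ W1'.support := by
              rw [hh] at he
              exact W1'.fst_mem_support_of_mem_edges he
            obtain ⟨m, hm1, hm2⟩ := hsupe y this
            exact hyS (Walk.mem_support_iff_exists_getVert.mpr ⟨m, hm2, by omega⟩)
          have h2 : e ≠ s(p.getVert (p.length - 1), v) := by
            intro hh
            have : p.getVert (p.length - 1) ∈ W1'.support := by
              rw [hh] at he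
              exact W1'.fst_mem_support_of_mem_edges he
            obtain ⟨m, hm1, hm2⟩ := hsupe _ this
            have := getVert_inj p hpath m (p.length - 1) (by omega) (by omega) hm2
            omega
          induction e using Sym2.ind with
          | _ p' q' =>
            rw [mem_edgeSet] at heT ⊢
            exact hkeep' p' q' heT h1 h2
        have hdist' : T'.dist u v ≤ n := by
          have hle := dist_le ((W1'.transfer T' hW1T').concat hbd')
          rw [Walk.length_concat, Walk.length_transfer, Walk.length_copy] at hle
          omega
        have hnp' : ∃ w, 3 ≤ Nat.card {x : V | T'.Adj w x} := by
          obtain ⟨w, hw⟩ := hnp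
          exact ⟨w, by rw [hdeg' w]; exact hw⟩
        have hu' : Nat.card {x : V | T'.Adj u x} = 1 := by rw [hdeg' u]; exact hu
        have hv' : Nat.card {x : V | T'.Adj v x} = 1 := by rw [hdeg' v]; exact hv
        obtain ⟨T'', htree'', hdeg'', w, hwu, hwv⟩ :=
          ih T' htree' hg hnp' huv hu' hv' hdist'
        exact ⟨T'', htree'', fun x => (hdeg'' x).trans (hdeg' x), w, hwu, hwv⟩

end LTCN

/-- Let `T` be a tree on `g ≥ 4` vertices which is not a path (i.e. it has a vertex of
degree ≥ 3), and let `u, v` be two leaves of `T`.  Then there is a tree `T'` on the same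
vertex set with the same degree at every vertex in which `u` and `v` are adjacent to a
common vertex. -/
theorem leaves_to_common_neighbor {V : Type*} [Fintype V] (T : SimpleGraph V)
    (hT : T.IsTree) (hg : 4 ≤ Fintype.card V)
    (hnp : ∃ w, 3 ≤ Nat.card {x : V | T.Adj w x})
    (u v : V) (huv : u ≠ v)
    (hu : Nat.card {x : V | T.Adj u x} = 1) (hv : Nat.card {x : V | T.Adj v x} = 1) :
    ∃ T' : SimpleGraph V, T'.IsTree ∧
      (∀ x, Nat.card {y : V | T'.Adj x y} = Nat.card {y : V | T.Adj x y}) ∧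
      ∃ w, T'.Adj w u ∧ T'.Adj w v := by exact LTCN.aux u v (T.dist u v) T hT hg hnp huv hu hv le_rfl
end

section
/- Let g ≥ 2 and let (P₁,p₁),…,(P_g,p_g) and (P₁,q₁),…,(P_g,q_g) be pairs of positive integers such that for every i one has p_i ≤ P_i, q_i ≤ P_i, and p_i ≡ q_i ≡ P_i (mod 2), and such that Σ p_i = Σ q_i = 2g - 2. Then the vector (q₁,…,q_g) can be transformed into (p₁,…,p_g) by a finite sequence of moves, where each move picks indices j ≠ k and replaces q_j by q_j - 2 and q_k by q_k + 2, and throughout the process every intermediate vector (q'₁,…,q'_g) satisfies 1 ≤ q'_i ≤ P_i and q'_i ≡ P_i (mod 2) for all i. -/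
/-- A move with respect to the bound vector `P`: pick indices `j ≠ k` with current value
at `j` at least 3, decrease entry `j` by 2 and increase entry `k` by 2; the resulting
vector must again satisfy `1 ≤ q'_i ≤ P_i` and `q'_i ≡ P_i (mod 2)` for all `i`. -/
def Move {g : ℕ} (P q q' : Fin g → ℕ) : Prop :=
  (∃ j k : Fin g, j ≠ k ∧ 3 ≤ q j ∧
      q' = Function.update (Function.update q j (q j - 2)) k (q k + 2)) ∧
    ∀ i, 1 ≤ q' i ∧ q' i ≤ P i ∧ q' i % 2 = P i % 2

private theorem moves_aux {g : ℕ} (P p : Fin g → ℕ)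
    (hp : ∀ i, 1 ≤ p i ∧ p i ≤ P i ∧ p i % 2 = P i % 2) :
    ∀ n (q : Fin g → ℕ),
      (∀ i, 1 ≤ q i ∧ q i ≤ P i ∧ q i % 2 = P i % 2) →
      (∑ i, q i = ∑ i, p i) →
      (∑ i, ((q i - p i) + (p i - q i)) = n) →
      Relation.ReflTransGen (Move P) q p := by
  intro n
  induction n using Nat.strong_induction_on with
  | _ n ih =>
    intro q hq hsum hD
    by_cases hqp : q = p
    · subst hqp; exact Relation.ReflTransGen.refl
    · have hj : ∃ j, p j < q j := by
        by_contra h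
        push_neg at h
        exact hqp (funext fun i =>
          (Finset.sum_eq_sum_iff_of_le (fun i _ => h i)).mp hsum i (Finset.mem_univ i))
      have hk : ∃ k, q k < p k := by
        by_contra h
        push_neg at h
        exact hqp (funext fun i =>
          ((Finset.sum_eq_sum_iff_of_le (fun i _ => h i)).mp hsum.symm i
            (Finset.mem_univ i)).symm)
      obtain ⟨j, hjlt⟩ := hj
      obtain ⟨k, hklt⟩ := hk
      have hjk : j ≠ k := by
        intro h; rw [h] at hjlt; omega
      have hj2 : p j + 2 ≤ q j := by
        have h1 := hp j; have h2 := hq j; omega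
      have hk2 : q k + 2 ≤ p k := by
        have h1 := hp k; have h2 := hq k; omega
      set q' := Function.update (Function.update q j (q j - 2)) k (q k + 2) with hq'def
      have hq'k : q' k = q k + 2 := by simp [hq'def]
      have hq'j : q' j = q j - 2 := by
        simp [hq'def, Function.update_of_ne hjk]
      have hq'other : ∀ i, i ≠ j → i ≠ k → q' i = q i := by
        intro i hij hik
        simp [hq'def, Function.update_of_ne hik, Function.update_of_ne hij]
      have hq' : ∀ i, 1 ≤ q' i ∧ q' i ≤ P i ∧ q' i % 2 = P i % 2 := by
        intro i
        by_cases hik : i = k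
        · subst hik
          rw [hq'k]
          have h1 := hp i; have h2 := hq i
          omega
        · by_cases hij : i = j
          · subst hij
            rw [hq'j]
            have h1 := hp i; have h2 := hq i
            omega
          · rw [hq'other i hij hik]; exact hq i
      have h3 : 3 ≤ q j := by have h1 := hp j; omega
      have hmove : Move P q q' := ⟨⟨j, k, hjk, h3, hq'def⟩, hq'⟩
      -- sum is preserved
      have hksub : (k : Fin g) ∈ Finset.univ := Finset.mem_univ k
      have hjsub : (j : Fin g) ∈ Finset.univ \ {k} := by
        simp [hjk]
      have hsum' : ∑ i, q' i = ∑ i, p i := by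
        have e1 : ∑ i, q' i =
            (q k + 2) + ((q j - 2) + ∑ i ∈ (Finset.univ \ {k}) \ {j}, q i) := by
          rw [hq'def, Finset.sum_update_of_mem hksub, Finset.sum_update_of_mem hjsub]
        have e2 : ∑ i, q i = q k + (q j + ∑ i ∈ (Finset.univ \ {k}) \ {j}, q i) := by
          rw [Finset.sum_eq_sum_sdiff_singleton_add hksub,
            Finset.sum_eq_sum_sdiff_singleton_add hjsub]
          ring
        omega
      -- distance decreases
      have hlt : ∑ i, ((q' i - p i) + (p i - q' i)) < n := by
        rw [← hD]
        apply Finset.sum_lt_sum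
        · intro i _
          by_cases hik : i = k
          · subst hik; rw [hq'k]; omega
          · by_cases hij : i = j
            · subst hij; rw [hq'j]; omega
            · rw [hq'other i hij hik]
        · exact ⟨k, Finset.mem_univ k, by rw [hq'k]; omega⟩
      exact Relation.ReflTransGen.head hmove
        (ih _ hlt q' hq' hsum' rfl)

/-- If `p` and `q` are vectors of positive integers with `p_i, q_i ≤ P_i`,
`p_i ≡ q_i ≡ P_i (mod 2)`, both summing to `2g - 2`, then `q` can be transformed into
`p` by finitely many moves, all intermediate vectors satisfying the same constraints. -/
theorem moves_transform (g : ℕ) (hg : 2 ≤ g) (P p q : Fin g → ℕ)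
    (hp : ∀ i, 1 ≤ p i ∧ p i ≤ P i ∧ p i % 2 = P i % 2)
    (hq : ∀ i, 1 ≤ q i ∧ q i ≤ P i ∧ q i % 2 = P i % 2)
    (hps : ∑ i, p i = 2 * g - 2) (hqs : ∑ i, q i = 2 * g - 2) :
    Relation.ReflTransGen (Move P) q p :=
  moves_aux P p hp _ q hq (hqs.trans hps.symm) rfl
end
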